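/- arXiv:1511.00165 — 6 statements merged into one kernel-verified Lean document; each statement's English description precedes it below -/
import Mathlib

section
/- Let $V_1,\ldots,V_r$ be subspaces of a finite-dimensional vector space $V$. There exists a system of linearly independent representatives, i.e., vectors $v_i \in V_i$ for each $i$ such that $v_1,\ldots,v_r$ are linearly independent, if and only if for every subset $I \subseteq \{1,\ldots,r\}$ one has $\dim\left(\sum_{i\in I} V_i\right) \geq |I|$. -/
/-! Rado's proof of Hall's theorem, linearized: shrink the subspaces while keeping the Hall
condition. If `dim Vs i ≥ 2`, write `Vs i = H ⊔ H'` with `H`, `H'` proper. Should both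
replacements fail, at sets `I ∋ i` and `J ∋ i`, the two violating sums `A ⊇ H`, `B ⊇ H'`
satisfy `A ⊔ B = V_{I ∪ J}` and `A ⊓ B ⊇ V_{(I ∩ J) \ {i}}`, so the modular law for `dim`
gives `|I| + |J| - 1 ≤ dim A + dim B ≤ |I| + |J| - 2`. Once every `Vs i` is a line `F ∙ v i`,
the condition for the whole index set says that the `v i` span a space of dimension `r`. -/

open Module Submodule Function

section

variable {F V ι : Type*} [Field F] [AddCommGroup V] [Module F V]

def HallCondition (Vs : ι → Submodule F V) : Prop :=
  ∀ I : Finset ι, I.card ≤ finrank F ↥(⨆ i ∈ I, Vs i)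

theorem Finset.iSup_update_of_notMem {β : Type*} [CompleteLattice β] [DecidableEq ι]
    (f : ι → β) (b : β) {I : Finset ι} {i : ι} (hi : i ∉ I) :
    ⨆ j ∈ I, update f i b j = ⨆ j ∈ I, f j :=
  iSup_congr fun _ ↦ iSup_congr fun hj ↦ update_of_ne (ne_of_mem_of_not_mem hj hi) b f

theorem Finset.iSup_update_of_mem {β : Type*} [CompleteLattice β] [DecidableEq ι]
    (f : ι → β) (b : β) {I : Finset ι} {i : ι} (hi : i ∈ I) :
    ⨆ j ∈ I, update f i b j = b ⊔ ⨆ j ∈ I.erase i, f j := by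
  rw [← iSup_insert_update f (notMem_erase i I), insert_erase hi]

theorem Submodule.exists_lt_lt_sup_eq_of_one_lt_finrank {W : Submodule F V}
    (hW : 1 < finrank F W) : ∃ H H' : Submodule F V, H < W ∧ H' < W ∧ H ⊔ H' = W := by
  obtain ⟨x, hxW, hx⟩ := W.exists_mem_ne_zero_of_ne_bot (by rintro rfl; simp at hW)
  obtain ⟨C, hC⟩ := (F ∙ x).exists_isCompl
  have hxle : F ∙ x ≤ W := (span_singleton_le_iff_mem x W).mpr hxW
  refine ⟨F ∙ x, C ⊓ W, lt_of_le_of_ne hxle ?_, lt_of_le_of_ne inf_le_right ?_, ?_⟩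
  · exact ne_of_apply_ne (fun S : Submodule F V ↦ finrank F S)
      (by rw [finrank_span_singleton hx]; omega)
  · intro h
    exact hx (disjoint_def.mp hC.disjoint x (mem_span_singleton_self x) (h.ge hxW).1)
  · rw [← sup_inf_assoc_of_le C hxle, hC.sup_eq_top, top_inf_eq]

variable [FiniteDimensional F V]

theorem LinearIndependent.hallCondition {Vs : ι → Submodule F V}
    {v : ι → V} (hv : ∀ i, v i ∈ Vs i) (hli : LinearIndependent F v) : HallCondition Vs := by
  intro I
  calc I.card = Fintype.card I := (Fintype.card_coe I).symm
    _ = finrank F (span F (Set.range fun i : I ↦ v i)) :=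
        (finrank_span_eq_card (hli.comp _ Subtype.val_injective)).symm
    _ ≤ finrank F ↥(⨆ i ∈ I, Vs i) := by
        refine Submodule.finrank_mono (span_le.mpr ?_)
        rintro _ ⟨i, rfl⟩
        exact le_biSup Vs i.2 (hv i)

theorem HallCondition.update_or [DecidableEq ι] {Vs : ι → Submodule F V} (h : HallCondition Vs)
    {i : ι} {H H' : Submodule F V} (hsup : H ⊔ H' = Vs i) :
    HallCondition (update Vs i H) ∨ HallCondition (update Vs i H') := by
  by_contra! hfail
  simp only [HallCondition, not_forall, not_le] at hfail
  obtain ⟨⟨I, hI⟩, ⟨J, hJ⟩⟩ := hfail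
  have hmem : ∀ {K : Finset ι} {G : Submodule F V},
      finrank F ↥(⨆ j ∈ K, update Vs i G j) < K.card → i ∈ K := fun {K} _ hK ↦ by
    by_contra hi
    rw [Finset.iSup_update_of_notMem _ _ hi] at hK
    exact (h K).not_gt hK
  have hiI := hmem hI
  have hiJ := hmem hJ
  rw [Finset.iSup_update_of_mem _ _ hiI] at hI
  rw [Finset.iSup_update_of_mem _ _ hiJ] at hJ
  set X := ⨆ j ∈ I.erase i, Vs j
  set Y := ⨆ j ∈ J.erase i, Vs j
  have hunion : (H ⊔ X) ⊔ (H' ⊔ Y) = ⨆ j ∈ I ∪ J, Vs j := by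
    rw [sup_sup_sup_comm, hsup, sup_sup_distrib_left, Finset.iSup_union,
      ← Finset.iSup_insert, ← Finset.iSup_insert, Finset.insert_erase hiI,
      Finset.insert_erase hiJ]
  have hinter : ⨆ j ∈ (I ∩ J).erase i, Vs j ≤ (H ⊔ X) ⊓ (H' ⊔ Y) :=
    le_inf
      (le_sup_of_le_right <| biSup_mono fun _ ↦
        (Finset.erase_subset_erase i Finset.inter_subset_left ·))
      (le_sup_of_le_right <| biSup_mono fun _ ↦
        (Finset.erase_subset_erase i Finset.inter_subset_right ·))
  have hmod := finrank_sup_add_finrank_inf_eq (H ⊔ X) (H' ⊔ Y)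
  rw [hunion] at hmod
  have hunion_card := h (I ∪ J)
  have hinter_card := (h ((I ∩ J).erase i)).trans (finrank_mono hinter)
  have hcard := Finset.card_union_add_card_inter I J
  have herase := Finset.card_erase_add_one (Finset.mem_inter_of_mem hiI hiJ)
  omega

theorem HallCondition.exists_lt_update [DecidableEq ι] {Vs : ι → Submodule F V}
    (h : HallCondition Vs) {i : ι} (hi : 1 < finrank F (Vs i)) :
    ∃ K < Vs i, HallCondition (update Vs i K) := by
  obtain ⟨H, H', hH, hH', hsup⟩ := exists_lt_lt_sup_eq_of_one_lt_finrank hi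
  exact (h.update_or hsup).elim (⟨H, hH, ·⟩) (⟨H', hH', ·⟩)

theorem HallCondition.exists_linearIndependent_of_finrank_le_one [Fintype ι]
    {Vs : ι → Submodule F V} (h : HallCondition Vs) (hle : ∀ i, finrank F (Vs i) ≤ 1) :
    ∃ v : ι → V, (∀ i, v i ∈ Vs i) ∧ LinearIndependent F v := by
  have hline : ∀ i, ∃ x, Vs i = F ∙ x := by
    intro i
    have hpos : 1 ≤ finrank F (Vs i) := by simpa using h {i}
    obtain ⟨x, hx, hx0⟩ :=
      (Vs i).exists_mem_ne_zero_of_ne_bot (by rintro hbot; simp [hbot] at hpos)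
    refine ⟨x, (eq_of_le_of_finrank_eq ((span_singleton_le_iff_mem x _).mpr hx) ?_).symm⟩
    rw [finrank_span_singleton hx0]
    exact (le_antisymm (hle i) hpos).symm
  choose v hv using hline
  refine ⟨v, fun i ↦ hv i ▸ mem_span_singleton_self (v i), ?_⟩
  have hspan : span F (Set.range v) = ⨆ i ∈ Finset.univ, Vs i := by
    simp only [Finset.mem_univ, iSup_pos, hv, span_range_eq_iSup]
  rw [linearIndependent_iff_card_le_finrank_span, Set.finrank, hspan]
  exact h Finset.univ

theorem HallCondition.exists_linearIndependent [Fintype ι] {Vs : ι → Submodule F V}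
    (h : HallCondition Vs) : ∃ v : ι → V, (∀ i, v i ∈ Vs i) ∧ LinearIndependent F v := by
  classical
  induction hn : ∑ i, finrank F (Vs i) using Nat.strong_induction_on generalizing Vs with
  | _ n ih =>
  by_cases hbig : ∃ i, 1 < finrank F (Vs i)
  · obtain ⟨i, hi⟩ := hbig
    obtain ⟨K, hK, hKhall⟩ := h.exists_lt_update hi
    have hKle : update Vs i K ≤ Vs := update_le_iff.mpr ⟨hK.le, fun _ _ ↦ le_rfl⟩
    have hsum : ∑ j, finrank F (update Vs i K j) < n := hn ▸
      Finset.sum_lt_sum (fun j _ ↦ finrank_mono (hKle j))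
        ⟨i, Finset.mem_univ i, by rw [update_self]; exact finrank_lt_finrank_of_lt hK⟩
    obtain ⟨v, hv, hli⟩ := ih _ hsum hKhall rfl
    exact ⟨v, fun j ↦ hKle j (hv j), hli⟩
  · push Not at hbig
    exact h.exists_linearIndependent_of_finrank_le_one hbig

end

/-- Moshonkin's linearization of Hall's marriage theorem: a system of linearly
independent representatives of the subspaces `Vs i` exists iff for every subset
`I` of indices, `dim (∑_{i ∈ I} Vs i) ≥ |I|`. -/
theorem moshonkin_hall {F V : Type*} [Field F] [AddCommGroup V] [Module F V]
    [FiniteDimensional F V] (r : ℕ) (Vs : Fin r → Submodule F V) :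
    (∃ v : Fin r → V, (∀ i, v i ∈ Vs i) ∧ LinearIndependent F v) ↔
      ∀ I : Finset (Fin r), I.card ≤ Module.finrank F ↥(⨆ i ∈ I, Vs i) :=
  ⟨fun ⟨_, hv, hli⟩ ↦ hli.hallCondition hv, HallCondition.exists_linearIndependent⟩
end

section
/- Let $[c_{ij}]$ be an $n\times n$ matrix with integer entries. Then $\max_{\sigma \in S_n} \sum_{i=1}^n c_{i\sigma(i)} = \min \left\{\sum_{i=1}^n a_i + \sum_{j=1}^n b_j : a, b \in \mathbb{Z}^n, \; a_i + b_j \geq c_{ij} \text{ for all } i,j\right\}$. -/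
/-- Kuhn–Munkres (assignment problem duality, integral case): the maximal sum of
a transversal of an integer matrix equals the minimal value `∑ a i + ∑ b j` over
integral dual potentials with `a i + b j ≥ c i j`. -/
theorem kuhn_munkres (n : ℕ) (c : Matrix (Fin n) (Fin n) ℤ) :
    IsLeast
      {s : ℤ | ∃ a b : Fin n → ℤ, (∀ i j, c i j ≤ a i + b j) ∧
        s = ∑ i, a i + ∑ j, b j}
      (Finset.univ.sup' Finset.univ_nonempty
        (fun σ : Equiv.Perm (Fin n) => ∑ i, c i (σ i))) := by
  set SetS : Set ℤ := {s : ℤ | ∃ a b : Fin n → ℤ, (∀ i j, c i j ≤ a i + b j) ∧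
        s = ∑ i, a i + ∑ j, b j} with hSetS
  set M : ℤ := Finset.univ.sup' Finset.univ_nonempty
      (fun σ : Equiv.Perm (Fin n) => ∑ i, c i (σ i)) with hMdef
  have hlb : ∀ s ∈ SetS, M ≤ s := by
    rintro s ⟨a, b, hab, rfl⟩
    apply Finset.sup'_le
    intro σ _
    calc ∑ i, c i (σ i) ≤ ∑ i, (a i + b (σ i)) :=
          Finset.sum_le_sum fun i _ => hab i (σ i)
      _ = ∑ i, a i + ∑ i, b (σ i) := Finset.sum_add_distrib
      _ = ∑ i, a i + ∑ j, b j := by rw [Equiv.sum_comp σ b]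
  have hne : ∃ s, s ∈ SetS := by
    refine ⟨_, fun i => ∑ j, |c i j|, fun _ => 0, fun i j => ?_, rfl⟩
    have h1 : c i j ≤ |c i j| := le_abs_self _
    have h2 : |c i j| ≤ ∑ k, |c i k| :=
      Finset.single_le_sum (fun k _ => abs_nonneg (c i k)) (Finset.mem_univ j)
    simpa using h1.trans h2
  obtain ⟨s₀, hs₀mem, hmin⟩ :=
    Int.exists_least_of_bdd (P := fun z => z ∈ SetS) ⟨M, fun z hz => hlb z hz⟩ hne
  obtain ⟨a, b, hab, hs⟩ := hs₀mem
  -- tight edges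
  set t : Fin n → Finset (Fin n) :=
    fun i => Finset.univ.filter (fun j => c i j = a i + b j) with ht
  by_cases hall : ∀ s : Finset (Fin n), s.card ≤ (s.biUnion t).card
  · obtain ⟨f, hfinj, hf⟩ :=
      (Finset.all_card_le_biUnion_card_iff_exists_injective t).mp hall
    have hfbij : Function.Bijective f := Finite.injective_iff_bijective.mp hfinj
    set σ : Equiv.Perm (Fin n) := Equiv.ofBijective f hfbij with hσ
    have htight : ∀ i, c i (σ i) = a i + b (σ i) := by
      intro i
      have := hf i
      simp only [ht, Finset.mem_filter] at this
      exact this.2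
    have hsum : ∑ i, c i (σ i) = s₀ := by
      rw [hs]
      calc ∑ i, c i (σ i) = ∑ i, (a i + b (σ i)) := by
            exact Finset.sum_congr rfl fun i _ => htight i
        _ = ∑ i, a i + ∑ i, b (σ i) := Finset.sum_add_distrib
        _ = ∑ i, a i + ∑ j, b j := by rw [Equiv.sum_comp σ b]
    have hle : s₀ ≤ M := by
      rw [← hsum, hMdef]
      exact Finset.le_sup' (fun σ : Equiv.Perm (Fin n) => ∑ i, c i (σ i))
        (Finset.mem_univ σ)
    have hge : M ≤ s₀ := hlb s₀ ⟨a, b, hab, hs⟩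
    have hMs : M = s₀ := le_antisymm hge hle
    exact ⟨⟨a, b, hab, hMs.trans hs⟩, hlb⟩
  · exfalso
    push_neg at hall
    obtain ⟨S, hS⟩ := hall
    set N : Finset (Fin n) := S.biUnion t with hN
    set a' : Fin n → ℤ := fun i => a i - (if i ∈ S then 1 else 0) with ha'
    set b' : Fin n → ℤ := fun j => b j + (if j ∈ N then 1 else 0) with hb'
    have hfeas : ∀ i j, c i j ≤ a' i + b' j := by
      intro i j
      simp only [ha', hb']
      by_cases hi : i ∈ S
      · by_cases hj : j ∈ N
        · simp [hi, hj]; have := hab i j; omega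
        · have hjt : j ∉ t i := fun hjt => hj (Finset.mem_biUnion.mpr ⟨i, hi, hjt⟩)
          have hne' : c i j ≠ a i + b j := by
            intro h; exact hjt (by simp [ht, h])
          have := hab i j
          simp [hi, hj]; omega
      · have := hab i j
        simp [hi]
        by_cases hj : j ∈ N <;> simp [hj] <;> omega
    have hsa : ∑ i, a' i = ∑ i, a i - S.card := by
      simp only [ha', Finset.sum_sub_distrib]
      congr 1
      rw [Finset.sum_ite_mem, Finset.univ_inter, Finset.sum_const, nsmul_eq_mul, mul_one]
    have hsb : ∑ j, b' j = ∑ j, b j + N.card := by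
      simp only [hb', Finset.sum_add_distrib]
      congr 1
      rw [Finset.sum_ite_mem, Finset.univ_inter, Finset.sum_const, nsmul_eq_mul, mul_one]
    have hnew : (∑ i, a' i + ∑ j, b' j) ∈ SetS := ⟨a', b', hfeas, rfl⟩
    have := hmin _ hnew
    rw [hsa, hsb, hs] at this
    have hNS : (N.card : ℤ) < S.card := by exact_mod_cast hS
    omega
end

section
/- Let $L, M, N$ be lattices in $\mathcal{K}^n$ with $\mathcal{K} = F((t))$, and let $i+j+k = n$ with $i,j,k \geq 0$. Define $f^t_{ijk}(L,M,N) = \max\{-\operatorname{val}\det(u_1,\ldots,u_i,v_1,\ldots,v_j,w_1,\ldots,w_k) : u_a \in L, v_b \in M, w_c \in N\}$, and similarly for other index patterns. Then for every lattice $P$ in $\mathcal{K}^n$, $f^t_{ijk}(L,M,N) \leq f^t_{i,j+k}(L,P) + f^t_{j,i+k}(M,P) + f^t_{k,i+j}(N,P) - 2 f^t_n(P)$. -/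
noncomputable section

/-- A lattice in `K^n`, `K = F((t))`: a finitely generated `F[[t]]`-submodule
of full rank (it spans `K^n` over `K`). -/
def IsLattice {F : Type*} [Field F] {n : ℕ}
    (L : Submodule (PowerSeries F) (Fin n → LaurentSeries F)) : Prop :=
  L.FG ∧ Submodule.span (LaurentSeries F) (L : Set (Fin n → LaurentSeries F)) = ⊤

/-- The set of values `-val (det (v 0, …, v (n-1)))` over nonzero determinants of
vectors `v m` chosen from the lattices `X m` (column `m` from lattice `X m`). -/
def detValSet {F : Type*} [Field F] {n : ℕ}
    (X : Fin n → Submodule (PowerSeries F) (Fin n → LaurentSeries F)) : Set ℤ :=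
  {z | ∃ v : Fin n → Fin n → LaurentSeries F, (∀ m, v m ∈ X m) ∧
    (Matrix.of fun p m => v m p).det ≠ 0 ∧
    z = -((Matrix.of fun p m => v m p).det).order}

/-- Column pattern for two lattices: the first `i` columns from `X`, the rest
from `Y`; `detValSet (cols2 X Y i)` computes `fᵗ_{i,n-i}(X,Y)`. -/
def cols2 {F : Type*} [Field F] {n : ℕ}
    (X Y : Submodule (PowerSeries F) (Fin n → LaurentSeries F)) (i : ℕ) :
    Fin n → Submodule (PowerSeries F) (Fin n → LaurentSeries F) :=
  fun m => if (m : ℕ) < i then X else Y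

/-- Column pattern for three lattices: first `i` columns from `X`, next `j`
from `Y`, remaining from `Z`; `detValSet (cols3 X Y Z i j)` computes
`fᵗ_{i,j,k}(X,Y,Z)` for `k = n - i - j`. -/
def cols3 {F : Type*} [Field F] {n : ℕ}
    (X Y Z : Submodule (PowerSeries F) (Fin n → LaurentSeries F)) (i j : ℕ) :
    Fin n → Submodule (PowerSeries F) (Fin n → LaurentSeries F) :=
  fun m => if (m : ℕ) < i then X else if (m : ℕ) < i + j then Y else Z

namespace TripleValAux

open Equiv Equiv.Perm Matrix Finset

set_option linter.unusedSectionVars false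
set_option linter.deprecated false

variable {K : Type*} [Field K]
variable {ι γ δ : Type*} [Fintype ι] [DecidableEq ι] [Fintype γ] [DecidableEq γ]
  [Fintype δ] [DecidableEq δ]

/-- Mixed matrix: `γ`-indexed columns from `W` at block positions `f ∘ inl`, the
other columns being `τ`-permuted columns of `Q`. -/
def NB (W Q : Matrix ι ι K) (f : (γ ⊕ δ) ≃ ι) (τ : Perm ι) : Matrix ι ι K :=
  Matrix.of fun r x => Sum.elim (fun c => W r (f (Sum.inl c)))
    (fun c => Q r (τ (f (Sum.inr c)))) (f.symm x)

lemma det_mixed (V : Matrix ι ι K) (τ : Perm ι) (f : (γ ⊕ δ) ≃ ι) :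
    (Matrix.of fun r x => Sum.elim (fun c => V r (f (Sum.inl c)))
        (fun c => if r = τ (f (Sum.inr c)) then (1 : K) else 0) (f.symm x)).det
      = ((Perm.sign τ : ℤ) : K) *
        (V.submatrix (fun r => τ (f (Sum.inl r))) (fun c => f (Sum.inl c))).det := by
  set B : Matrix ι ι K := Matrix.of fun r x => Sum.elim (fun c => V r (f (Sum.inl c)))
        (fun c => if r = τ (f (Sum.inr c)) then (1 : K) else 0) (f.symm x) with hB
  set π : Perm (γ ⊕ δ) := f.symm.permCongr τ with hπ
  have hπ' : ∀ r, f (π r) = τ (f r) := by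
    intro r
    simp [hπ, Equiv.permCongr_apply]
  have hentry : ((B.submatrix f f).submatrix π id)
      = Matrix.fromBlocks
          (V.submatrix (fun r => τ (f (Sum.inl r))) (fun c => f (Sum.inl c))) 0
          (V.submatrix (fun r => τ (f (Sum.inr r))) (fun c => f (Sum.inl c))) 1 := by
    ext r x
    have hBx : ∀ (a : ι) (x : γ ⊕ δ), B a (f x) = Sum.elim (fun c => V a (f (Sum.inl c)))
        (fun c => if a = τ (f (Sum.inr c)) then (1 : K) else 0) x := by
      intro a x; simp [hB]
    rcases r with r | r <;> rcases x with c | c <;>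
      simp [Matrix.submatrix_apply, hBx, hπ', fromBlocks, (τ.injective.comp f.injective).eq_iff,
        Matrix.one_apply]
  have hdet1 : ((B.submatrix f f).submatrix π id).det
      = ((Perm.sign π : ℤ) : K) * (B.submatrix f f).det := by
    rw [Matrix.det_permute]
  have hdet2 : ((B.submatrix f f).submatrix π id).det
      = (V.submatrix (fun r => τ (f (Sum.inl r))) (fun c => f (Sum.inl c))).det := by
    rw [hentry, Matrix.det_fromBlocks_zero₁₂, Matrix.det_one, mul_one]
  have hs : Perm.sign π = Perm.sign τ := Equiv.Perm.sign_permCongr f.symm τ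
  have hBf : (B.submatrix f f).det = B.det := Matrix.det_submatrix_equiv_self f B
  rw [← hBf, ← hs]
  rcases Int.units_eq_one_or (Perm.sign π) with h | h <;> rw [h] at hdet1 ⊢ <;>
    push_cast at hdet1 ⊢ <;> rw [← hdet2, hdet1] <;> ring

lemma NB_eq_mul (W Q : Matrix ι ι K) (hQ : IsUnit Q.det) (f : (γ ⊕ δ) ≃ ι) (τ : Perm ι) :
    NB W Q f τ = Q * (Matrix.of fun r x => Sum.elim (fun c => (Q⁻¹ * W) r (f (Sum.inl c)))
      (fun c => if r = τ (f (Sum.inr c)) then (1 : K) else 0) (f.symm x)) := by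
  ext r x
  rcases hx : f.symm x with c | c
  · have h1 : NB W Q f τ r x = W r (f (Sum.inl c)) := by simp [NB, hx]
    have h2 : (Q * (Q⁻¹ * W)) r (f (Sum.inl c)) = W r (f (Sum.inl c)) := by
      rw [Matrix.mul_nonsing_inv_cancel_left _ _ hQ]
    rw [h1, ← h2, Matrix.mul_apply, Matrix.mul_apply]
    exact Finset.sum_congr rfl fun s _ => by simp [hx]
  · have h1 : NB W Q f τ r x = Q r (τ (f (Sum.inr c))) := by simp [NB, hx]
    rw [h1, Matrix.mul_apply]
    simp [hx, mul_ite, mul_one, mul_zero]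

lemma det_NB (W Q : Matrix ι ι K) (hQ : IsUnit Q.det) (f : (γ ⊕ δ) ≃ ι) (τ : Perm ι) :
    (NB W Q f τ).det = Q.det * (((Perm.sign τ : ℤ) : K) *
      ((Q⁻¹ * W).submatrix (fun r => τ (f (Sum.inl r))) (fun c => f (Sum.inl c))).det) := by
  rw [NB_eq_mul W Q hQ f τ, Matrix.det_mul, det_mixed]

set_option maxHeartbeats 1000000 in
lemma laplace3 {a b c : ℕ} (V : Matrix (Fin a ⊕ (Fin b ⊕ Fin c)) (Fin a ⊕ (Fin b ⊕ Fin c)) K) :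
    ∃ T : Finset (Perm (Fin a ⊕ (Fin b ⊕ Fin c))),
      V.det = ∑ τ ∈ T, ((Perm.sign τ : ℤ) : K) *
        ((V.submatrix (fun r => τ (Sum.inl r)) Sum.inl).det *
         ((V.submatrix (fun r => τ (Sum.inr (Sum.inl r))) (fun x => Sum.inr (Sum.inl x))).det *
          (V.submatrix (fun r => τ (Sum.inr (Sum.inr r))) (fun x => Sum.inr (Sum.inr x))).det)) := by
  classical
  have det_eq_sum_perm : ∀ {ι' : Type} [Fintype ι'] [DecidableEq ι'] (M : Matrix ι' ι' K),
      M.det = ∑ σ : Perm ι', ((Perm.sign σ : ℤ) : K) * ∏ x, M (σ x) x := by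
    intro ι' _ _ M
    rw [Matrix.det_apply]
    exact Finset.sum_congr rfl fun σ _ => by rw [Units.smul_def, zsmul_eq_mul]
  let Ψ : Perm (Fin a) × Perm (Fin b) × Perm (Fin c) →* Perm (Fin a ⊕ (Fin b ⊕ Fin c)) :=
    (Equiv.Perm.sumCongrHom (Fin a) (Fin b ⊕ Fin c)).comp
      ((MonoidHom.id (Perm (Fin a))).prodMap (Equiv.Perm.sumCongrHom (Fin b) (Fin c)))
  have hΨ : ∀ p : Perm (Fin a) × Perm (Fin b) × Perm (Fin c),
      Ψ p = Equiv.sumCongr p.1 (Equiv.sumCongr p.2.1 p.2.2) := fun _ => rfl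
  have hΨinj : Function.Injective Ψ := by
    intro p p' h
    rw [hΨ, hΨ] at h
    have h1 := Equiv.Perm.sumCongrHom_injective
      (show Equiv.Perm.sumCongrHom (Fin a) (Fin b ⊕ Fin c) (p.1, Equiv.sumCongr p.2.1 p.2.2)
          = Equiv.Perm.sumCongrHom (Fin a) (Fin b ⊕ Fin c) (p'.1, Equiv.sumCongr p'.2.1 p'.2.2)
        from h)
    rw [Prod.mk.injEq] at h1
    have h3 := Equiv.Perm.sumCongrHom_injective
      (show Equiv.Perm.sumCongrHom (Fin b) (Fin c) (p.2.1, p.2.2)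
          = Equiv.Perm.sumCongrHom (Fin b) (Fin c) (p'.2.1, p'.2.2) from h1.2)
    rw [Prod.mk.injEq] at h3
    exact Prod.ext h1.1 (Prod.ext h3.1 h3.2)
  set H := Ψ.range with hH
  haveI : Fintype (Perm (Fin a ⊕ (Fin b ⊕ Fin c)) ⧸ H) := Fintype.ofFinite _
  let Θ : (Perm (Fin a ⊕ (Fin b ⊕ Fin c)) ⧸ H) × (Perm (Fin a) × Perm (Fin b) × Perm (Fin c)) →
      Perm (Fin a ⊕ (Fin b ⊕ Fin c)) :=
    fun qp => qp.1.out * Ψ qp.2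
  have hout : ∀ q : Perm (Fin a ⊕ (Fin b ⊕ Fin c)) ⧸ H,
      (QuotientGroup.mk q.out : Perm (Fin a ⊕ (Fin b ⊕ Fin c)) ⧸ H) = q := fun q =>
    QuotientGroup.out_eq' q
  have hmk : ∀ (q : Perm (Fin a ⊕ (Fin b ⊕ Fin c)) ⧸ H)
      (p : Perm (Fin a) × Perm (Fin b) × Perm (Fin c)),
      (QuotientGroup.mk (q.out * Ψ p) : Perm (Fin a ⊕ (Fin b ⊕ Fin c)) ⧸ H) = q := by
    intro q p
    rw [QuotientGroup.mk_mul_of_mem _ (MonoidHom.mem_range.mpr ⟨p, rfl⟩)]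
    exact hout q
  have hbij : Function.Bijective Θ := by
    constructor
    · rintro ⟨q1, p1⟩ ⟨q2, p2⟩ h
      have hq : q1 = q2 := by rw [← hmk q1 p1, ← hmk q2 p2]; exact congrArg _ h
      subst hq
      have : Ψ p1 = Ψ p2 := mul_left_cancel h
      rw [hΨinj this]
    · intro σ
      have hmem : (QuotientGroup.mk σ : Perm (Fin a ⊕ (Fin b ⊕ Fin c)) ⧸ H).out⁻¹ * σ ∈ H := by
        rw [← QuotientGroup.eq]
        exact hout _
      obtain ⟨p, hp⟩ := MonoidHom.mem_range.mp hmem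
      exact ⟨⟨QuotientGroup.mk σ, p⟩, by simp only [Θ, hp, mul_inv_cancel_left]⟩
  have key : ∀ τ : Perm (Fin a ⊕ (Fin b ⊕ Fin c)),
      (∑ p : Perm (Fin a) × Perm (Fin b) × Perm (Fin c),
        ((Perm.sign (τ * Ψ p) : ℤ) : K) * ∏ x, V ((τ * Ψ p) x) x)
      = ((Perm.sign τ : ℤ) : K) *
        ((V.submatrix (fun r => τ (Sum.inl r)) Sum.inl).det *
         ((V.submatrix (fun r => τ (Sum.inr (Sum.inl r))) (fun x => Sum.inr (Sum.inl x))).det *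
          (V.submatrix (fun r => τ (Sum.inr (Sum.inr r))) (fun x => Sum.inr (Sum.inr x))).det)) := by
    intro τ
    have hfact : ∀ {A B C : Type} [Fintype A] [Fintype B] [Fintype C]
        (f : A → K) (g : B → K) (h : C → K) (s : K),
        (∑ α : A, ∑ β : B, ∑ γ : C, s * (f α * (g β * h γ)))
          = s * ((∑ α : A, f α) * ((∑ β : B, g β) * (∑ γ : C, h γ))) := by
      intro A B C _ _ _ f g h s
      simp only [← Finset.mul_sum, ← Finset.sum_mul]
    have hstep : (∑ p : Perm (Fin a) × Perm (Fin b) × Perm (Fin c),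
          ((Perm.sign (τ * Ψ p) : ℤ) : K) * ∏ x, V ((τ * Ψ p) x) x)
        = ∑ α : Perm (Fin a), ∑ β : Perm (Fin b), ∑ γ' : Perm (Fin c),
            ((Perm.sign τ : ℤ) : K) *
              ((((Perm.sign α : ℤ) : K) *
                  ∏ x, (V.submatrix (fun r => τ (Sum.inl r)) Sum.inl) (α x) x) *
               ((((Perm.sign β : ℤ) : K) *
                  ∏ x, (V.submatrix (fun r => τ (Sum.inr (Sum.inl r)))
                    (fun x => Sum.inr (Sum.inl x))) (β x) x) *
                (((Perm.sign γ' : ℤ) : K) *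
                  ∏ x, (V.submatrix (fun r => τ (Sum.inr (Sum.inr r)))
                    (fun x => Sum.inr (Sum.inr x))) (γ' x) x))) := by
      rw [Fintype.sum_prod_type]
      refine Finset.sum_congr rfl fun α _ => ?_
      rw [Fintype.sum_prod_type]
      refine Finset.sum_congr rfl fun β _ => ?_
      refine Finset.sum_congr rfl fun γ' _ => ?_
      have e1 : ∀ x, (τ * Ψ (α, β, γ')) (Sum.inl x) = τ (Sum.inl (α x)) := by
        intro x; simp [hΨ, Perm.mul_apply, Equiv.sumCongr_apply, Sum.map_inl]
      have e2 : ∀ x, (τ * Ψ (α, β, γ')) (Sum.inr (Sum.inl x)) = τ (Sum.inr (Sum.inl (β x))) := by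
        intro x; simp [hΨ, Perm.mul_apply, Equiv.sumCongr_apply, Sum.map_inl, Sum.map_inr]
      have e3 : ∀ x, (τ * Ψ (α, β, γ')) (Sum.inr (Sum.inr x)) = τ (Sum.inr (Sum.inr (γ' x))) := by
        intro x; simp [hΨ, Perm.mul_apply, Equiv.sumCongr_apply, Sum.map_inr]
      have hprod : (∏ x, V ((τ * Ψ (α, β, γ')) x) x)
          = (∏ x, V (τ (Sum.inl (α x))) (Sum.inl x)) *
            ((∏ x, V (τ (Sum.inr (Sum.inl (β x)))) (Sum.inr (Sum.inl x))) *
             (∏ x, V (τ (Sum.inr (Sum.inr (γ' x)))) (Sum.inr (Sum.inr x)))) := by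
        rw [Fintype.prod_sum_type, Fintype.prod_sum_type]
        simp only [e1, e2, e3]
      have hsign : ((Perm.sign (τ * Ψ (α, β, γ')) : ℤ) : K)
          = ((Perm.sign τ : ℤ) : K) * (((Perm.sign α : ℤ) : K) *
              (((Perm.sign β : ℤ) : K) * ((Perm.sign γ' : ℤ) : K))) := by
        rw [hΨ]
        simp only [Perm.sign_mul, Equiv.Perm.sign_sumCongr]
        push_cast
        ring
      rw [hprod, hsign]
      simp only [Matrix.submatrix_apply]
      ring
    rw [hstep, hfact]
    rw [← det_eq_sum_perm, ← det_eq_sum_perm, ← det_eq_sum_perm]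
  refine ⟨Finset.image (fun q : Perm (Fin a ⊕ (Fin b ⊕ Fin c)) ⧸ H => q.out) Finset.univ, ?_⟩
  have hout_inj : ∀ q ∈ (Finset.univ : Finset (Perm (Fin a ⊕ (Fin b ⊕ Fin c)) ⧸ H)),
      ∀ q' ∈ Finset.univ, q.out = q'.out → q = q' := by
    intro q _ q' _ h
    rw [← hout q, ← hout q', h]
  rw [Finset.sum_image hout_inj]
  calc V.det = ∑ σ : Perm (Fin a ⊕ (Fin b ⊕ Fin c)),
        ((Perm.sign σ : ℤ) : K) * ∏ x, V (σ x) x := det_eq_sum_perm V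
    _ = ∑ qp : (Perm (Fin a ⊕ (Fin b ⊕ Fin c)) ⧸ H) ×
          (Perm (Fin a) × Perm (Fin b) × Perm (Fin c)),
          ((Perm.sign (Θ qp) : ℤ) : K) * ∏ x, V (Θ qp x) x :=
        (Fintype.sum_bijective Θ hbij _ _ fun qp => rfl).symm
    _ = ∑ q : Perm (Fin a ⊕ (Fin b ⊕ Fin c)) ⧸ H,
          ∑ p : Perm (Fin a) × Perm (Fin b) × Perm (Fin c),
          ((Perm.sign (q.out * Ψ p) : ℤ) : K) * ∏ x, V ((q.out * Ψ p) x) x := by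
        rw [Fintype.sum_prod_type]
    _ = _ := Finset.sum_congr rfl fun q _ => key q.out

/-- The key determinant identity: `det W ⬝ (det Q)² = ∑ det N₁ ⬝ det N₂ ⬝ det N₃`. -/
lemma keyIdentity {a b c : ℕ}
    (W Q : Matrix (Fin a ⊕ (Fin b ⊕ Fin c)) (Fin a ⊕ (Fin b ⊕ Fin c)) K) (hQ : Q.det ≠ 0)
    (f₂ : (Fin b ⊕ (Fin a ⊕ Fin c)) ≃ (Fin a ⊕ (Fin b ⊕ Fin c)))
    (hf₂ : ∀ x : Fin b, f₂ (Sum.inl x) = Sum.inr (Sum.inl x))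
    (f₃ : (Fin c ⊕ (Fin a ⊕ Fin b)) ≃ (Fin a ⊕ (Fin b ⊕ Fin c)))
    (hf₃ : ∀ x : Fin c, f₃ (Sum.inl x) = Sum.inr (Sum.inr x)) :
    ∃ T : Finset (Perm (Fin a ⊕ (Fin b ⊕ Fin c))),
      W.det * (Q.det * Q.det) = ∑ τ ∈ T,
        (NB W Q (Equiv.refl _) τ).det * ((NB W Q f₂ τ).det * (NB W Q f₃ τ).det) := by
  obtain ⟨T, hT⟩ := laplace3 (Q⁻¹ * W)
  refine ⟨T, ?_⟩
  have hQu : IsUnit Q.det := isUnit_iff_ne_zero.mpr hQ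
  have hW : W.det = Q.det * (Q⁻¹ * W).det := by
    conv_lhs => rw [← Matrix.mul_nonsing_inv_cancel_left Q W hQu]
    rw [Matrix.det_mul]
  rw [hW, hT, Finset.mul_sum, Finset.sum_mul]
  refine Finset.sum_congr rfl fun τ _ => ?_
  rw [det_NB W Q hQu (Equiv.refl _) τ, det_NB W Q hQu f₂ τ, det_NB W Q hQu f₃ τ]
  have hc2r : (fun r : Fin b => τ (f₂ (Sum.inl r))) = fun r => τ (Sum.inr (Sum.inl r)) := by
    funext r; rw [hf₂]
  have hc2c : (fun x : Fin b => f₂ (Sum.inl x)) = fun x => Sum.inr (Sum.inl x) := by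
    funext x; rw [hf₂]
  have hc3r : (fun r : Fin c => τ (f₃ (Sum.inl r))) = fun r => τ (Sum.inr (Sum.inr r)) := by
    funext r; rw [hf₃]
  have hc3c : (fun x : Fin c => f₃ (Sum.inl x)) = fun x => Sum.inr (Sum.inr x) := by
    funext x; rw [hf₃]
  rw [hc2r, hc2c, hc3r, hc3c]
  simp only [Equiv.refl_apply]
  rcases Int.units_eq_one_or (Perm.sign τ) with h | h <;> rw [h] <;> push_cast <;> ring

lemma mem_detValSet_of {F : Type*} [Field F] {n : ℕ}
    (pat : Fin n → Submodule (PowerSeries F) (Fin n → LaurentSeries F))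
    {ι : Type*} [Fintype ι] [DecidableEq ι]
    (X : Matrix ι ι (LaurentSeries F)) (er ec : ι ≃ Fin n)
    (hcols : ∀ x : ι, (fun p => X (er.symm p) x) ∈ pat (ec x)) (hX : X.det ≠ 0) :
    (-X.det.order) ∈ detValSet pat := by
  have hperm : X.submatrix er.symm ec.symm
      = (X.submatrix ec.symm ec.symm).submatrix (er.symm.trans ec) id := by
    ext p m
    simp [Matrix.submatrix_apply]
  have hdet : (X.submatrix er.symm ec.symm).det
      = ((Perm.sign (er.symm.trans ec) : ℤ) : LaurentSeries F) * X.det := by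
    rw [hperm, Matrix.det_permute, Matrix.det_submatrix_equiv_self]
  have hM : (Matrix.of fun p m => X (er.symm p) (ec.symm m)) = X.submatrix er.symm ec.symm := rfl
  refine ⟨fun m p => X (er.symm p) (ec.symm m), fun m => ?_, ?_, ?_⟩
  · have := hcols (ec.symm m)
    rwa [Equiv.apply_symm_apply] at this
  · show (Matrix.of fun p m => X (er.symm p) (ec.symm m)).det ≠ 0
    rw [hM, hdet]
    rcases Int.units_eq_one_or (Perm.sign (er.symm.trans ec)) with h | h <;> rw [h] <;>
      push_cast <;> simpa using hX
  · show -X.det.order = -((Matrix.of fun p m => X (er.symm p) (ec.symm m)).det).order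
    rw [hM, hdet]
    rcases Int.units_eq_one_or (Perm.sign (er.symm.trans ec)) with h | h <;> rw [h]
    · norm_num
    · have e : ((((-1 : ℤˣ) : ℤ)) : LaurentSeries F) * X.det = -(X.det) := by push_cast; ring
      rw [e, HahnSeries.order_neg]

lemma order_sum_ge {F : Type*} [Field F] {A : Type*} (s : Finset A)
    (g : A → LaurentSeries F) (b : ℤ) (h : ∀ a ∈ s, g a = 0 ∨ b ≤ (g a).order) :
    (∑ a ∈ s, g a) = 0 ∨ b ≤ (∑ a ∈ s, g a).order := by
  classical
  induction s using Finset.induction with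
  | empty => left; simp
  | @insert a s' ha ih =>
    rw [Finset.sum_insert ha]
    have hrest := ih fun x hx => h x (Finset.mem_insert_of_mem hx)
    rcases h a (Finset.mem_insert_self a s') with h0 | ha'
    · rw [h0, zero_add]; exact hrest
    rcases hrest with h0 | hs
    · rw [h0, add_zero]; right; exact ha'
    by_cases htot : g a + ∑ x ∈ s', g x = 0
    · left; exact htot
    · right
      calc b ≤ min (g a).order (∑ x ∈ s', g x).order := le_min ha' hs
        _ ≤ (g a + ∑ x ∈ s', g x).order := HahnSeries.min_order_le_order_add htot

end TripleValAux

/-- The easy inequality of the main conjecture: for every lattice `P`,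
`fᵗ_{ijk}(L,M,N) ≤ fᵗ_{i,j+k}(L,P) + fᵗ_{j,i+k}(M,P) + fᵗ_{k,i+j}(N,P) - 2 fᵗₙ(P)`. -/
theorem triple_val_le_network {F : Type*} [Field F] {n : ℕ} (i j k : ℕ)
    (hijk : i + j + k = n)
    (L M N P : Submodule (PowerSeries F) (Fin n → LaurentSeries F))
    (hL : IsLattice L) (hM : IsLattice M) (hN : IsLattice N) (hP : IsLattice P)
    (fLMN fLP fMP fNP fP : ℤ)
    (h1 : IsGreatest (detValSet (cols3 L M N i j)) fLMN)
    (h2 : IsGreatest (detValSet (cols2 L P i)) fLP)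
    (h3 : IsGreatest (detValSet (cols2 M P j)) fMP)
    (h4 : IsGreatest (detValSet (cols2 N P k)) fNP)
    (h5 : IsGreatest (detValSet (fun _ => P)) fP) :
    fLMN ≤ fLP + fMP + fNP - 2 * fP := by
  classical
  obtain ⟨v, hv, hvdet, hvz⟩ := h1.1
  obtain ⟨q, hq, hqdet, hqz⟩ := h5.1
  have hn1 : i + (j + k) = n := by omega
  have hn2 : j + (i + k) = n := by omega
  have hn3 : k + (i + j) = n := by omega
  set e : (Fin i ⊕ (Fin j ⊕ Fin k)) ≃ Fin n :=
    ((Equiv.refl (Fin i)).sumCongr finSumFinEquiv).trans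
      (finSumFinEquiv.trans (finCongr hn1)) with hedef
  set g₂ : (Fin j ⊕ (Fin i ⊕ Fin k)) ≃ Fin n :=
    ((Equiv.refl (Fin j)).sumCongr finSumFinEquiv).trans
      (finSumFinEquiv.trans (finCongr hn2)) with hg2def
  set g₃ : (Fin k ⊕ (Fin i ⊕ Fin j)) ≃ Fin n :=
    ((Equiv.refl (Fin k)).sumCongr finSumFinEquiv).trans
      (finSumFinEquiv.trans (finCongr hn3)) with hg3def
  have he1 : ∀ x : Fin i, ((e (Sum.inl x)) : ℕ) = (x : ℕ) := fun x => by
    simp [hedef]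
  have he2 : ∀ x : Fin j, ((e (Sum.inr (Sum.inl x))) : ℕ) = i + (x : ℕ) := fun x => by
    simp [hedef]
  have he3 : ∀ x : Fin k, ((e (Sum.inr (Sum.inr x))) : ℕ) = i + (j + (x : ℕ)) := fun x => by
    simp [hedef]
  have hg2a : ∀ x : Fin j, ((g₂ (Sum.inl x)) : ℕ) = (x : ℕ) := fun x => by
    simp [hg2def]
  have hg2b : ∀ x : Fin i, ((g₂ (Sum.inr (Sum.inl x))) : ℕ) = j + (x : ℕ) := fun x => by
    simp [hg2def]
  have hg2c : ∀ x : Fin k, ((g₂ (Sum.inr (Sum.inr x))) : ℕ) = j + (i + (x : ℕ)) := fun x => by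
    simp [hg2def]
  have hg3a : ∀ x : Fin k, ((g₃ (Sum.inl x)) : ℕ) = (x : ℕ) := fun x => by
    simp [hg3def]
  have hg3b : ∀ x : Fin i, ((g₃ (Sum.inr (Sum.inl x))) : ℕ) = k + (x : ℕ) := fun x => by
    simp [hg3def]
  have hg3c : ∀ x : Fin j, ((g₃ (Sum.inr (Sum.inr x))) : ℕ) = k + (i + (x : ℕ)) := fun x => by
    simp [hg3def]
  set Wι := (Matrix.of fun p m => v m p).submatrix e e with hWι
  set Qι := (Matrix.of fun p m => q m p).submatrix e e with hQι
  have hWd : Wι.det = (Matrix.of fun p m => v m p).det :=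
    Matrix.det_submatrix_equiv_self e _
  have hQd : Qι.det = (Matrix.of fun p m => q m p).det :=
    Matrix.det_submatrix_equiv_self e _
  have hWne : Wι.det ≠ 0 := by rw [hWd]; exact hvdet
  have hQne : Qι.det ≠ 0 := by rw [hQd]; exact hqdet
  let f₂ : (Fin j ⊕ (Fin i ⊕ Fin k)) ≃ (Fin i ⊕ (Fin j ⊕ Fin k)) :=
    { toFun := fun x => match x with
        | Sum.inl y => Sum.inr (Sum.inl y)
        | Sum.inr (Sum.inl y) => Sum.inl y
        | Sum.inr (Sum.inr y) => Sum.inr (Sum.inr y)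
      invFun := fun x => match x with
        | Sum.inl y => Sum.inr (Sum.inl y)
        | Sum.inr (Sum.inl y) => Sum.inl y
        | Sum.inr (Sum.inr y) => Sum.inr (Sum.inr y)
      left_inv := by rintro (y | y | y) <;> rfl
      right_inv := by rintro (y | y | y) <;> rfl }
  let f₃ : (Fin k ⊕ (Fin i ⊕ Fin j)) ≃ (Fin i ⊕ (Fin j ⊕ Fin k)) :=
    { toFun := fun x => match x with
        | Sum.inl y => Sum.inr (Sum.inr y)
        | Sum.inr (Sum.inl y) => Sum.inl y
        | Sum.inr (Sum.inr y) => Sum.inr (Sum.inl y)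
      invFun := fun x => match x with
        | Sum.inl y => Sum.inr (Sum.inl y)
        | Sum.inr (Sum.inl y) => Sum.inr (Sum.inr y)
        | Sum.inr (Sum.inr y) => Sum.inl y
      left_inv := by rintro (y | y | y) <;> rfl
      right_inv := by rintro (y | y | y) <;> rfl }
  have hf2A : ∀ y : Fin j, f₂ (Sum.inl y) = Sum.inr (Sum.inl y) := fun y => rfl
  have hf2B : ∀ y : Fin i, f₂ (Sum.inr (Sum.inl y)) = Sum.inl y := fun y => rfl
  have hf2C : ∀ y : Fin k, f₂ (Sum.inr (Sum.inr y)) = Sum.inr (Sum.inr y) := fun y => rfl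
  have hf2sA : ∀ y : Fin i, f₂.symm (Sum.inl y) = Sum.inr (Sum.inl y) := fun y => rfl
  have hf2sB : ∀ y : Fin j, f₂.symm (Sum.inr (Sum.inl y)) = Sum.inl y := fun y => rfl
  have hf2sC : ∀ y : Fin k, f₂.symm (Sum.inr (Sum.inr y)) = Sum.inr (Sum.inr y) := fun y => rfl
  have hf3A : ∀ y : Fin k, f₃ (Sum.inl y) = Sum.inr (Sum.inr y) := fun y => rfl
  have hf3B : ∀ y : Fin i, f₃ (Sum.inr (Sum.inl y)) = Sum.inl y := fun y => rfl
  have hf3C : ∀ y : Fin j, f₃ (Sum.inr (Sum.inr y)) = Sum.inr (Sum.inl y) := fun y => rfl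
  have hf3sA : ∀ y : Fin i, f₃.symm (Sum.inl y) = Sum.inr (Sum.inl y) := fun y => rfl
  have hf3sB : ∀ y : Fin j, f₃.symm (Sum.inr (Sum.inl y)) = Sum.inr (Sum.inr y) := fun y => rfl
  have hf3sC : ∀ y : Fin k, f₃.symm (Sum.inr (Sum.inr y)) = Sum.inl y := fun y => rfl
  obtain ⟨T, hT⟩ := TripleValAux.keyIdentity Wι Qι hQne f₂ (fun x => rfl) f₃ (fun x => rfl)
  -- bounds on the three factors
  have hb1 : ∀ τ, (TripleValAux.NB Wι Qι (Equiv.refl _) τ).det = 0 ∨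
      -fLP ≤ ((TripleValAux.NB Wι Qι (Equiv.refl _) τ).det).order := by
    intro τ
    by_cases hd : (TripleValAux.NB Wι Qι (Equiv.refl _) τ).det = 0
    · exact Or.inl hd
    right
    have hmem := TripleValAux.mem_detValSet_of (cols2 L P i)
      (TripleValAux.NB Wι Qι (Equiv.refl _) τ) e e ?_ hd
    · have := h2.2 hmem
      omega
    intro x
    rcases x with cL | cR
    · have hcol : (fun p => (TripleValAux.NB Wι Qι (Equiv.refl _) τ) (e.symm p) (Sum.inl cL))
          = v (e (Sum.inl cL)) := by
        funext p
        simp [TripleValAux.NB, hWι, Matrix.submatrix_apply]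
      rw [hcol]
      have hpat : cols2 L P i (e (Sum.inl cL)) = L := by
        simp only [cols2, he1 cL]
        rw [if_pos cL.isLt]
      have hpat3 : cols3 L M N i j (e (Sum.inl cL)) = L := by
        simp only [cols3, he1 cL]
        rw [if_pos cL.isLt]
      rw [hpat, ← hpat3]
      exact hv _
    · have hcol : (fun p => (TripleValAux.NB Wι Qι (Equiv.refl _) τ) (e.symm p) (Sum.inr cR))
          = q (e (τ (Sum.inr cR))) := by
        funext p
        simp [TripleValAux.NB, hQι, Matrix.submatrix_apply]
      rw [hcol]
      have hpat : cols2 L P i (e (Sum.inr cR)) = P := by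
        rcases cR with c | c
        · simp only [cols2, he2 c]
          rw [if_neg (by omega)]
        · simp only [cols2, he3 c]
          rw [if_neg (by omega)]
      rw [hpat]
      exact hq _
  have hb2 : ∀ τ, (TripleValAux.NB Wι Qι f₂ τ).det = 0 ∨
      -fMP ≤ ((TripleValAux.NB Wι Qι f₂ τ).det).order := by
    intro τ
    by_cases hd : (TripleValAux.NB Wι Qι f₂ τ).det = 0
    · exact Or.inl hd
    right
    have hmem := TripleValAux.mem_detValSet_of (cols2 M P j)
      (TripleValAux.NB Wι Qι f₂ τ) e (f₂.symm.trans g₂) ?_ hd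
    · have := h3.2 hmem
      omega
    intro x
    rcases x with cI | cJ | cK
    · have hcol : (fun p => (TripleValAux.NB Wι Qι f₂ τ) (e.symm p) (Sum.inl cI))
          = q (e (τ (Sum.inl cI))) := by
        funext p
        simp [TripleValAux.NB, hQι, Matrix.submatrix_apply, hf2A, hf2B, hf2C, hf2sA, hf2sB, hf2sC]
      rw [hcol]
      have hpat : cols2 M P j ((f₂.symm.trans g₂) (Sum.inl cI)) = P := by
        have : ((f₂.symm.trans g₂) (Sum.inl cI) : ℕ) = j + (cI : ℕ) := by
          simp only [Equiv.trans_apply]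
          exact hg2b cI
        simp only [cols2, this]
        rw [if_neg (by omega)]
      rw [hpat]
      exact hq _
    · have hcol : (fun p => (TripleValAux.NB Wι Qι f₂ τ) (e.symm p) (Sum.inr (Sum.inl cJ)))
          = v (e (Sum.inr (Sum.inl cJ))) := by
        funext p
        simp [TripleValAux.NB, hWι, Matrix.submatrix_apply, hf2A, hf2B, hf2C, hf2sA, hf2sB, hf2sC]
      rw [hcol]
      have hpat : cols2 M P j ((f₂.symm.trans g₂) (Sum.inr (Sum.inl cJ))) = M := by
        have : ((f₂.symm.trans g₂) (Sum.inr (Sum.inl cJ)) : ℕ) = (cJ : ℕ) := by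
          simp only [Equiv.trans_apply]
          exact hg2a cJ
        simp only [cols2, this]
        rw [if_pos cJ.isLt]
      have hpat3 : cols3 L M N i j (e (Sum.inr (Sum.inl cJ))) = M := by
        simp only [cols3, he2 cJ]
        rw [if_neg (by omega), if_pos (by have := cJ.isLt; omega)]
      rw [hpat, ← hpat3]
      exact hv _
    · have hcol : (fun p => (TripleValAux.NB Wι Qι f₂ τ) (e.symm p) (Sum.inr (Sum.inr cK)))
          = q (e (τ (Sum.inr (Sum.inr cK)))) := by
        funext p
        simp [TripleValAux.NB, hQι, Matrix.submatrix_apply, hf2A, hf2B, hf2C, hf2sA, hf2sB, hf2sC]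
      rw [hcol]
      have hpat : cols2 M P j ((f₂.symm.trans g₂) (Sum.inr (Sum.inr cK))) = P := by
        have : ((f₂.symm.trans g₂) (Sum.inr (Sum.inr cK)) : ℕ) = j + (i + (cK : ℕ)) := by
          simp only [Equiv.trans_apply]
          exact hg2c cK
        simp only [cols2, this]
        rw [if_neg (by omega)]
      rw [hpat]
      exact hq _
  have hb3 : ∀ τ, (TripleValAux.NB Wι Qι f₃ τ).det = 0 ∨
      -fNP ≤ ((TripleValAux.NB Wι Qι f₃ τ).det).order := by
    intro τ
    by_cases hd : (TripleValAux.NB Wι Qι f₃ τ).det = 0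
    · exact Or.inl hd
    right
    have hmem := TripleValAux.mem_detValSet_of (cols2 N P k)
      (TripleValAux.NB Wι Qι f₃ τ) e (f₃.symm.trans g₃) ?_ hd
    · have := h4.2 hmem
      omega
    intro x
    rcases x with cI | cJ | cK
    · have hcol : (fun p => (TripleValAux.NB Wι Qι f₃ τ) (e.symm p) (Sum.inl cI))
          = q (e (τ (Sum.inl cI))) := by
        funext p
        simp [TripleValAux.NB, hQι, Matrix.submatrix_apply, hf3A, hf3B, hf3C, hf3sA, hf3sB, hf3sC]
      rw [hcol]
      have hpat : cols2 N P k ((f₃.symm.trans g₃) (Sum.inl cI)) = P := by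
        have : ((f₃.symm.trans g₃) (Sum.inl cI) : ℕ) = k + (cI : ℕ) := by
          simp only [Equiv.trans_apply]
          exact hg3b cI
        simp only [cols2, this]
        rw [if_neg (by omega)]
      rw [hpat]
      exact hq _
    · have hcol : (fun p => (TripleValAux.NB Wι Qι f₃ τ) (e.symm p) (Sum.inr (Sum.inl cJ)))
          = q (e (τ (Sum.inr (Sum.inl cJ)))) := by
        funext p
        simp [TripleValAux.NB, hQι, Matrix.submatrix_apply, hf3A, hf3B, hf3C, hf3sA, hf3sB, hf3sC]
      rw [hcol]
      have hpat : cols2 N P k ((f₃.symm.trans g₃) (Sum.inr (Sum.inl cJ))) = P := by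
        have : ((f₃.symm.trans g₃) (Sum.inr (Sum.inl cJ)) : ℕ) = k + (i + (cJ : ℕ)) := by
          simp only [Equiv.trans_apply]
          exact hg3c cJ
        simp only [cols2, this]
        rw [if_neg (by omega)]
      rw [hpat]
      exact hq _
    · have hcol : (fun p => (TripleValAux.NB Wι Qι f₃ τ) (e.symm p) (Sum.inr (Sum.inr cK)))
          = v (e (Sum.inr (Sum.inr cK))) := by
        funext p
        simp [TripleValAux.NB, hWι, Matrix.submatrix_apply, hf3A, hf3B, hf3C, hf3sA, hf3sB, hf3sC]
      rw [hcol]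
      have hpat : cols2 N P k ((f₃.symm.trans g₃) (Sum.inr (Sum.inr cK))) = N := by
        have : ((f₃.symm.trans g₃) (Sum.inr (Sum.inr cK)) : ℕ) = (cK : ℕ) := by
          simp only [Equiv.trans_apply]
          exact hg3a cK
        simp only [cols2, this]
        rw [if_pos cK.isLt]
      have hpat3 : cols3 L M N i j (e (Sum.inr (Sum.inr cK))) = N := by
        simp only [cols3, he3 cK]
        rw [if_neg (by omega), if_neg (by omega)]
      rw [hpat, ← hpat3]
      exact hv _
  -- order computation
  have hLHSne : Wι.det * (Qι.det * Qι.det) ≠ 0 :=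
    mul_ne_zero hWne (mul_ne_zero hQne hQne)
  have hSne : (∑ τ ∈ T, (TripleValAux.NB Wι Qι (Equiv.refl _) τ).det *
      ((TripleValAux.NB Wι Qι f₂ τ).det * (TripleValAux.NB Wι Qι f₃ τ).det)) ≠ 0 := by
    rw [← hT]; exact hLHSne
  have hbound := TripleValAux.order_sum_ge T
    (fun τ => (TripleValAux.NB Wι Qι (Equiv.refl _) τ).det *
      ((TripleValAux.NB Wι Qι f₂ τ).det * (TripleValAux.NB Wι Qι f₃ τ).det))
    (-fLP + (-fMP + -fNP)) ?_
  · rcases hbound with h0 | hb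
    · exact absurd h0 hSne
    rw [← hT] at hb
    have hordL : (Wι.det * (Qι.det * Qι.det)).order
        = Wι.det.order + (Qι.det.order + Qι.det.order) := by
      rw [HahnSeries.order_mul hWne (mul_ne_zero hQne hQne), HahnSeries.order_mul hQne hQne]
    have hWo : Wι.det.order = -fLMN := by
      rw [hWd]; omega
    have hQo : Qι.det.order = -fP := by
      rw [hQd]; omega
    rw [hordL, hWo, hQo] at hb
    omega
  · intro τ _
    by_cases hd1 : (TripleValAux.NB Wι Qι (Equiv.refl _) τ).det = 0
    · left; rw [hd1, zero_mul]
    by_cases hd2 : (TripleValAux.NB Wι Qι f₂ τ).det = 0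
    · left; rw [hd2, zero_mul, mul_zero]
    by_cases hd3 : (TripleValAux.NB Wι Qι f₃ τ).det = 0
    · left; rw [hd3, mul_zero, mul_zero]
    right
    have ho1 := (hb1 τ).resolve_left hd1
    have ho2 := (hb2 τ).resolve_left hd2
    have ho3 := (hb3 τ).resolve_left hd3
    rw [HahnSeries.order_mul hd1 (mul_ne_zero hd2 hd3), HahnSeries.order_mul hd2 hd3]
    omega

end
end

section
/- Let $x_1,\ldots,x_n$ be a basis of $\mathcal{K}^n$ over $\mathcal{K} = F((t))$, and for $1 \leq i \leq n$ let $L_i = \langle t^{-c_{i1}}x_1, \ldots, t^{-c_{in}}x_n\rangle_{\mathcal{O}}$ for integers $c_{ij}$ (so all $L_i$ lie in a common apartment). Then there exists a lattice $P$ (of the form $P = \langle t^{-b_1}x_1,\ldots,t^{-b_n}x_n\rangle_{\mathcal{O}}$ for integers $b_j$) such that $f^t_{1,1,\ldots,1}(L_1,\ldots,L_n) = \sum_{i=1}^n f^t_{1,n-1}(L_i, P) - (n-1) f^t_n(P)$. -/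
noncomputable section

/-- The lattice spanned by `t^{-c j} • x j` for a frame `x`. -/
def frameLattice {F : Type*} [Field F] {n : ℕ} (x : Fin n → (Fin n → LaurentSeries F))
    (c : Fin n → ℤ) : Submodule (PowerSeries F) (Fin n → LaurentSeries F) :=
  Submodule.span (PowerSeries F)
    (Set.range fun j => (HahnSeries.single (-(c j)) (1 : F) : LaurentSeries F) • x j)

/-! In the frame `x`, a vector of `⟨t^{-e j} x j⟩` has coordinates of valuation `≥ -e j`, so
expanding the determinant shows that choosing column `m` from `⟨t^{-d m j} x j⟩_j` gives at most
`max_σ ∑ₘ d m (σ m) - val det x`, which is attained on frame vectors: in an apartment, `fᵗ` is the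
weight of a maximal assignment. The formula is then strong duality for the assignment
problem, `max_σ ∑ᵢ c i (σ i) = min_b (∑ᵢ maxⱼ (c i j - b j) + ∑ⱼ b j)`, with `P` given by a
minimising `b`. For a minimising `b` the columns where each row attains its maximum satisfy Hall's
condition, since raising `b` by one on the neighbourhood of a violating set of rows would lower the
dual bound; the resulting matching is a permutation attaining the dual bound. -/

open Finset

section Assignment

variable {ι : Type*} [Fintype ι]

def rowMax (d : ι → ι → ℤ) (b : ι → ℤ) (i : ι) : ℤ :=
  univ.sup' ⟨i, mem_univ i⟩ fun j => d i j - b j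

def dualBound (d : ι → ι → ℤ) (b : ι → ℤ) : ℤ :=
  ∑ i, rowMax d b i + ∑ j, b j

def tightCols (d : ι → ι → ℤ) (b : ι → ℤ) (i : ι) : Finset ι :=
  {j | d i j - b j = rowMax d b i}

variable (d : ι → ι → ℤ) (b : ι → ℤ)

lemma sub_le_rowMax (i j : ι) : d i j - b j ≤ rowMax d b i :=
  le_sup' (fun j => d i j - b j) (mem_univ j)

lemma sum_apply_perm_eq_sum_sub_add (σ : Equiv.Perm ι) :
    ∑ i, d i (σ i) = ∑ i, (d i (σ i) - b (σ i)) + ∑ j, b j := by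
  rw [sum_sub_distrib, Equiv.sum_comp σ b, sub_add_cancel]

variable [DecidableEq ι]

def maxAssignment (d : ι → ι → ℤ) : ℤ :=
  univ.sup' univ_nonempty fun σ : Equiv.Perm ι => ∑ i, d i (σ i)

lemma sum_le_maxAssignment (σ : Equiv.Perm ι) : ∑ i, d i (σ i) ≤ maxAssignment d :=
  le_sup' (fun σ : Equiv.Perm ι => ∑ i, d i (σ i)) (mem_univ σ)

lemma maxAssignment_le_dualBound : maxAssignment d ≤ dualBound d b :=
  sup'_le _ _ fun σ _ => by
    rw [sum_apply_perm_eq_sum_sub_add d b σ, dualBound]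
    gcongr with i
    exact sub_le_rowMax d b i (σ i)

lemma dualBound_le_maxAssignment_of_hall
    (hall : ∀ s : Finset ι, #s ≤ #(s.biUnion (tightCols d b))) :
    dualBound d b ≤ maxAssignment d := by
  obtain ⟨f, hf, hfmem⟩ := (all_card_le_biUnion_card_iff_exists_injective _).1 hall
  let σ := Equiv.ofBijective f hf.bijective_of_finite
  have htight : ∀ i, d i (σ i) - b (σ i) = rowMax d b i := fun i => (mem_filter.1 (hfmem i)).2
  calc dualBound d b = ∑ i, d i (σ i) := by
        simp only [sum_apply_perm_eq_sum_sub_add d b σ, htight, dualBound]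
    _ ≤ maxAssignment d := sum_le_maxAssignment d σ

lemma exists_dualBound_add_card_le (s : Finset ι) :
    ∃ b', dualBound d b' + #s ≤ dualBound d b + #(s.biUnion (tightCols d b)) := by
  set N := s.biUnion (tightCols d b)
  refine ⟨fun j => b j + if j ∈ N then 1 else 0, ?_⟩
  have hrow : ∀ i, rowMax d (fun j => b j + if j ∈ N then 1 else 0) i
      ≤ rowMax d b i - if i ∈ s then 1 else 0 := fun i =>
    sup'_le _ _ fun j _ => by
      have hle := sub_le_rowMax d b i j
      by_cases hi : i ∈ s
      · by_cases hj : j ∈ N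
        · simp only [hj, hi, if_true]; omega
        · have hne : d i j - b j ≠ rowMax d b i := fun h =>
            hj (mem_biUnion.2 ⟨i, hi, mem_filter.2 ⟨mem_univ j, h⟩⟩)
          simp only [hj, hi, if_true, if_false]; omega
      · simp only [hi, if_false, sub_zero]
        split_ifs <;> omega
  have hsum := sum_le_sum fun i (_ : i ∈ univ) => hrow i
  simp only [dualBound, sum_add_distrib, sum_sub_distrib, sum_boole, filter_univ_mem] at hsum ⊢
  omega

theorem exists_dualBound_eq_maxAssignment : ∃ b, dualBound d b = maxAssignment d := by
  obtain ⟨_, ⟨b, rfl⟩, hmin⟩ := Int.exists_least_of_bdd (P := fun z => ∃ b, dualBound d b = z)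
    ⟨maxAssignment d, by rintro _ ⟨b, rfl⟩; exact maxAssignment_le_dualBound d b⟩ ⟨_, 0, rfl⟩
  refine ⟨b, le_antisymm (dualBound_le_maxAssignment_of_hall d b fun s => ?_)
    (maxAssignment_le_dualBound d b)⟩
  by_contra! hs
  obtain ⟨b', hb'⟩ := exists_dualBound_add_card_le d b s
  have := hmin _ ⟨b', rfl⟩
  omega

lemma maxAssignment_const : maxAssignment (fun _ : ι => b) = ∑ j, b j := by
  simp only [maxAssignment, Equiv.sum_comp, sup'_const]

lemma maxAssignment_update_const (r : ι → ℤ) (i₀ : ι) :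
    maxAssignment (Function.update (fun _ => b) i₀ r) = rowMax (fun _ => r) b i₀ + ∑ j, b j := by
  have key : ∀ σ : Equiv.Perm ι, ∑ m, Function.update (fun _ => b) i₀ r m (σ m)
      = (r (σ i₀) - b (σ i₀)) + ∑ j, b j := by
    intro σ
    rw [← Equiv.sum_comp σ b, ← sub_eq_iff_eq_add, ← sum_sub_distrib,
      Fintype.sum_eq_single i₀ fun m hm => by simp [hm]]
    simp
  refine le_antisymm (sup'_le _ _ fun σ _ => ?_) ?_
  · rw [key]
    gcongr
    exact sub_le_rowMax (fun _ => r) b i₀ (σ i₀)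
  · rw [← le_sub_iff_add_le]
    refine sup'_le _ _ fun j _ => ?_
    have := sum_le_maxAssignment (Function.update (fun _ => b) i₀ r) (Equiv.swap i₀ j)
    rw [key, Equiv.swap_apply_left] at this
    exact le_sub_iff_add_le.2 this

end Assignment

section HahnSeries

open HahnSeries

variable {R : Type*} [CommRing R]

lemma HahnSeries.orderTop_prod [IsDomain R] {α : Type*} (s : Finset α) (f : α → HahnSeries ℤ R) :
    (∏ a ∈ s, f a).orderTop = ∑ a ∈ s, (f a).orderTop := by
  classical
  induction s using Finset.induction with
  | empty => simp
  | insert a s ha ih => rw [prod_insert ha, sum_insert ha, orderTop_mul, ih]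

lemma HahnSeries.neg_maxAssignment_le_orderTop_det [IsDomain R] {ι : Type*} [Fintype ι]
    [DecidableEq ι] (M : Matrix ι ι (HahnSeries ℤ R)) (d : ι → ι → ℤ)
    (h : ∀ i j, ((-d i j : ℤ) : WithTop ℤ) ≤ (M i j).orderTop) :
    ((-maxAssignment d : ℤ) : WithTop ℤ) ≤ M.det.orderTop := by
  rw [← M.det_transpose, Matrix.det_apply', ← addVal_apply]
  refine AddValuation.map_le_sum _ fun σ _ => ?_
  have hprod : ((-maxAssignment d : ℤ) : WithTop ℤ) ≤ (∏ i, M i (σ i)).orderTop :=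
    calc ((-maxAssignment d : ℤ) : WithTop ℤ) ≤ ((∑ i, -d i (σ i) : ℤ) : WithTop ℤ) := by
          rw [sum_neg_distrib]
          exact_mod_cast neg_le_neg (sum_le_maxAssignment d σ)
      _ = ∑ i, ((-d i (σ i) : ℤ) : WithTop ℤ) := WithTop.coe_sum ..
      _ ≤ (∏ i, M i (σ i)).orderTop := by
          rw [orderTop_prod]
          exact sum_le_sum fun i _ => h i (σ i)
  rcases Int.units_eq_one_or (Equiv.Perm.sign σ) with hσ | hσ <;>
    simpa [hσ, addVal_apply] using hprod

end HahnSeries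

section FrameLattice

open HahnSeries

variable {F : Type*} [Field F] {n : ℕ}

lemma zero_le_orderTop_ofPowerSeries {R : Type*} [Semiring R] (a : PowerSeries R) :
    0 ≤ (ofPowerSeries ℤ R a).orderTop :=
  le_orderTop_iff_forall.2 fun j hj => by
    rw [PowerSeries.coeff_coe, if_pos (by exact_mod_cast hj)]

lemma exists_coords_of_mem_frameLattice {x : Fin n → Fin n → LaurentSeries F} {e : Fin n → ℤ}
    {v : Fin n → LaurentSeries F} (hv : v ∈ frameLattice x e) :
    ∃ a : Fin n → LaurentSeries F,
      (∀ j, ((-e j : ℤ) : WithTop ℤ) ≤ (a j).orderTop) ∧ v = ∑ j, a j • x j := by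
  obtain ⟨α, rfl⟩ := (Submodule.mem_span_range_iff_exists_fun _).1 hv
  refine ⟨fun j => ofPowerSeries ℤ F (α j) * single (-e j) 1, fun j => ?_, ?_⟩
  · rw [orderTop_mul, orderTop_single one_ne_zero]
    exact le_add_of_nonneg_left (zero_le_orderTop_ofPowerSeries (α j))
  · refine sum_congr rfl fun j _ => ?_
    rw [mul_smul, ← LaurentSeries.coe_algebraMap, algebraMap_smul]

lemma Matrix.det_of_sum_smul {R ι : Type*} [CommRing R] [Fintype ι] [DecidableEq ι]
    (a x : ι → ι → R) :
    (Matrix.of fun p m => (∑ j, a m j • x j) p).det = (Matrix.of a).det * (Matrix.of x).det := by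
  have : (Matrix.of fun p m => (∑ j, a m j • x j) p) = (Matrix.of a * Matrix.of x).transpose := by
    ext p m
    simp [Matrix.mul_apply, Finset.sum_apply]
  rw [this, Matrix.det_transpose, Matrix.det_mul]

variable {x : Fin n → Fin n → LaurentSeries F}

lemma le_of_mem_detValSet_frameLattice (d : Fin n → Fin n → ℤ) {z : ℤ}
    (hz : z ∈ detValSet fun m => frameLattice x (d m)) :
    z ≤ maxAssignment d - (Matrix.of x).det.order := by
  obtain ⟨v, hv, hne, rfl⟩ := hz
  choose a ha hva using fun m => exists_coords_of_mem_frameLattice (hv m)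
  obtain rfl : v = fun m => ∑ j, a m j • x j := funext hva
  rw [Matrix.det_of_sum_smul] at hne ⊢
  have hA := neg_maxAssignment_le_orderTop_det (Matrix.of a) d ha
  rw [← order_eq_orderTop_of_ne_zero (left_ne_zero_of_mul hne), WithTop.coe_le_coe] at hA
  rw [order_mul (left_ne_zero_of_mul hne) (right_ne_zero_of_mul hne)]
  omega

lemma maxAssignment_sub_order_mem_detValSet_frameLattice (hx : (Matrix.of x).det ≠ 0)
    (d : Fin n → Fin n → ℤ) :
    maxAssignment d - (Matrix.of x).det.order ∈ detValSet fun m => frameLattice x (d m) := by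
  obtain ⟨σ, -, hσ⟩ :=
    exists_mem_eq_sup' univ_nonempty fun σ : Equiv.Perm (Fin n) => ∑ m, d m (σ m)
  have hdet : (Matrix.of fun p m => ((single (-d m (σ m)) 1 : LaurentSeries F) • x (σ m)) p).det
      = (∏ m, (single (-d m (σ m)) 1 : LaurentSeries F))
          * (((Equiv.Perm.sign σ : ℤ) : LaurentSeries F) * (Matrix.of x).det) := by
    rw [← Matrix.det_transpose (Matrix.of x), ← Matrix.det_permute', ← Matrix.det_mul_row]
    rfl
  have hsign : ((Equiv.Perm.sign σ : ℤ) : LaurentSeries F) ≠ 0 := by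
    rcases Int.units_eq_one_or (Equiv.Perm.sign σ) with h | h <;> simp [h]
  have hprod : (∏ m, (single (-d m (σ m)) 1 : LaurentSeries F)) ≠ 0 :=
    prod_ne_zero_iff.2 fun m _ => single_ne_zero one_ne_zero
  have hprod_order : (∏ m, (single (-d m (σ m)) 1 : LaurentSeries F)).order = -maxAssignment d := by
    rw [← WithTop.coe_inj, order_eq_orderTop_of_ne_zero hprod, orderTop_prod, maxAssignment, hσ,
      ← sum_neg_distrib, WithTop.coe_sum]
    exact sum_congr rfl fun m _ => orderTop_single one_ne_zero
  have hsign_order : ((Equiv.Perm.sign σ : ℤ) : LaurentSeries F).order = 0 := by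
    rcases Int.units_eq_one_or (Equiv.Perm.sign σ) with h | h <;> simp [h]
  refine ⟨_, fun m => Submodule.subset_span ⟨σ m, rfl⟩,
    hdet ▸ mul_ne_zero hprod (mul_ne_zero hsign hx), ?_⟩
  rw [hdet, order_mul hprod (mul_ne_zero hsign hx), order_mul hsign hx, hprod_order, hsign_order]
  ring

lemma isGreatest_detValSet_frameLattice (hx : (Matrix.of x).det ≠ 0) (d : Fin n → Fin n → ℤ) :
    IsGreatest (detValSet fun m => frameLattice x (d m))
      (maxAssignment d - (Matrix.of x).det.order) :=
  ⟨maxAssignment_sub_order_mem_detValSet_frameLattice hx d,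
    fun _ => le_of_mem_detValSet_frameLattice d⟩

lemma isGreatest_detValSet_const_frameLattice (hx : (Matrix.of x).det ≠ 0) (b : Fin n → ℤ) :
    IsGreatest (detValSet fun _ => frameLattice x b) (∑ j, b j - (Matrix.of x).det.order) := by
  simpa only [maxAssignment_const] using isGreatest_detValSet_frameLattice hx fun _ => b

lemma isGreatest_detValSet_cols2_frameLattice (hx : (Matrix.of x).det ≠ 0)
    (c : Fin n → Fin n → ℤ) (b : Fin n → ℤ) (i : Fin n) :
    IsGreatest (detValSet (cols2 (frameLattice x (c i)) (frameLattice x b) 1))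
      (rowMax c b i + ∑ j, b j - (Matrix.of x).det.order) := by
  have hcols : cols2 (frameLattice x (c i)) (frameLattice x b) 1
      = fun m => frameLattice x (Function.update (fun _ => b) ⟨0, i.pos⟩ (c i) m) := by
    funext m
    simp [cols2, Function.update_apply, Fin.ext_iff, apply_ite (frameLattice x)]
  rw [hcols]
  exact maxAssignment_update_const b (c i) _ ▸ isGreatest_detValSet_frameLattice hx _

end FrameLattice

theorem apartment_network_formula_general {F : Type*} [Field F] {n : ℕ}
    (x : Fin n → (Fin n → LaurentSeries F))
    (hx_ind : LinearIndependent (LaurentSeries F) x)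
    (c : Fin n → Fin n → ℤ)
    (L : Fin n → Submodule (PowerSeries F) (Fin n → LaurentSeries F))
    (hL : ∀ i, L i = frameLattice x (c i)) :
    ∃ b : Fin n → ℤ, ∃ (fAll : ℤ) (g : Fin n → ℤ) (e : ℤ),
      IsGreatest (detValSet L) fAll ∧
      (∀ i, IsGreatest (detValSet (cols2 (L i) (frameLattice x b) 1)) (g i)) ∧
      IsGreatest (detValSet (fun _ => frameLattice x b)) e ∧
      fAll = (∑ i, g i) - ((n : ℤ) - 1) * e := by
  have hx : (Matrix.of x).det ≠ 0 :=
    ((Matrix.isUnit_iff_isUnit_det _).1 (Matrix.linearIndependent_rows_iff_isUnit.1 hx_ind)).ne_zero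
  obtain rfl : L = fun i => frameLattice x (c i) := funext hL
  obtain ⟨b, hb⟩ := exists_dualBound_eq_maxAssignment c
  refine ⟨b, _, _, _, isGreatest_detValSet_frameLattice hx c,
    isGreatest_detValSet_cols2_frameLattice hx c b,
    isGreatest_detValSet_const_frameLattice hx b, ?_⟩
  simp only [← hb, dualBound, sum_sub_distrib, sum_add_distrib, sum_const, card_univ,
    Fintype.card_fin, nsmul_eq_mul]
  ring

/-- Theorem (apartments), case of `n` lattices with all multiplicities `1`: if
`L 0, …, L (n-1)` lie in a common apartment (given by a frame `x`), there is a
lattice `P = ⟨t^{-b 0} x 0, …, t^{-b (n-1)} x (n-1)⟩` in the same apartment with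
`fᵗ_{1,…,1}(L 0,…,L (n-1)) = ∑ᵢ fᵗ_{1,n-1}(L i, P) - (n-1) fᵗₙ(P)`. -/
theorem apartment_network_formula {F : Type*} [Field F] {n : ℕ}
    (x : Fin n → (Fin n → LaurentSeries F))
    (hx_ind : LinearIndependent (LaurentSeries F) x)
    (hx_span : Submodule.span (LaurentSeries F) (Set.range x) = ⊤)
    (c : Fin n → Fin n → ℤ)
    (L : Fin n → Submodule (PowerSeries F) (Fin n → LaurentSeries F))
    (hL : ∀ i, L i = frameLattice x (c i)) :
    ∃ b : Fin n → ℤ, ∃ (fAll : ℤ) (g : Fin n → ℤ) (e : ℤ),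
      IsGreatest (detValSet L) fAll ∧
      (∀ i, IsGreatest (detValSet (cols2 (L i) (frameLattice x b) 1)) (g i)) ∧
      IsGreatest (detValSet (fun _ => frameLattice x b)) e ∧
      fAll = (∑ i, g i) - ((n : ℤ) - 1) * e :=
  apartment_network_formula_general x hx_ind c L hL
end
end

section
/- Let $x_1,\ldots,x_n$ be a basis of $\mathcal{K}^n$, and let $L_i = \langle t^{-c_{i1}}x_1,\ldots,t^{-c_{in}}x_n\rangle_{\mathcal{O}}$ for an integer matrix $[c_{ij}]$. Then $f^t_{1,\ldots,1}(L_1,\ldots,L_n) = \max_{\sigma \in S_n}\left(\sum_{i=1}^n c_{i\sigma(i)} - \operatorname{val}\det(x_1,\ldots,x_n)\right)$, i.e., the maximal $n$-fold determinantal valuation of lattices in a common apartment equals the maximal transversal sum of the exponent matrix minus the valuation of the determinant of the frame. -/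
/-!
Write the chosen vectors in the frame, `v m = ∑ j, b j m • x j`, so that
`det v = det x * det b`, and membership `v m ∈ L m` says `val (b j m) ≥ -c m j`.
Expanding `det b` over permutations bounds its valuation below by the minimum over `σ` of
`-∑ i, c i (σ i)`. The bound is attained by `v m = t^(-c m (σ m)) • x (σ m)` for a maximising
`σ`, whose determinant is `± t^(-∑ i, c i (σ i)) * det x`.
-/

noncomputable section

open Matrix Equiv HahnSeries

namespace AddValuation

variable {R Γ₀ : Type*} [CommRing R] [LinearOrderedAddCommMonoidWithTop Γ₀] (v : AddValuation R Γ₀)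

theorem map_units_int_smul (u : ℤˣ) (x : R) : v (u • x) = v x := by
  rcases Int.units_eq_one_or u with rfl | rfl <;> simp

theorem map_prod {ι : Type*} (s : Finset ι) (f : ι → R) :
    v (∏ i ∈ s, f i) = ∑ i ∈ s, v (f i) := by
  induction s using Finset.cons_induction with
  | empty => simp
  | cons a s _ ih => rw [Finset.prod_cons, Finset.sum_cons, v.map_mul, ih]

theorem le_map_det {n : Type*} [Fintype n] [DecidableEq n] (B : Matrix n n R) {b : Γ₀}
    (h : ∀ σ : Perm n, b ≤ ∑ i, v (B (σ i) i)) : b ≤ v B.det := by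
  rw [det_apply]
  refine v.map_le_sum fun σ _ => ?_
  rw [map_units_int_smul, map_prod]
  exact h σ

theorem map_det_mul_permute_cols {n : Type*} [Fintype n] [DecidableEq n] (X : Matrix n n R)
    (σ : Perm n) (d : n → R) :
    v (Matrix.of fun i j => d j * X i (σ j)).det = ∑ j, v (d j) + v X.det := by
  rw [show (Matrix.of fun i j => d j * X i (σ j)) = Matrix.of fun i j => d j * X.submatrix id σ i j
      from rfl, det_mul_row, det_permute', v.map_mul, map_prod, ← zsmul_eq_mul, ← Units.smul_def,
    map_units_int_smul]

end AddValuation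

theorem Matrix.det_of_sum_smul_cols {R n : Type*} [CommRing R] [Fintype n] [DecidableEq n]
    (x : n → n → R) (B : Matrix n n R) :
    (Matrix.of fun p m => (∑ j, B j m • x j) p).det = (Matrix.of fun p i => x i p).det * B.det := by
  rw [← det_mul]
  congr 1
  ext p m
  simp [Matrix.mul_apply, Finset.sum_apply, mul_comm]

namespace HahnSeries

section Valuation

variable {Γ R : Type*} [AddCancelCommMonoid Γ] [LinearOrder Γ] [IsOrderedCancelAddMonoid Γ]
  [Ring R] [IsDomain R]

theorem addVal_eq_coe_iff {x : R⟦Γ⟧} {g : Γ} : addVal Γ R x = g ↔ x ≠ 0 ∧ x.order = g := by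
  by_cases hx : x = 0
  · simp [hx]
  · simp [addVal_apply_of_ne hx, hx]

theorem addVal_single_one (g : Γ) : addVal Γ R (single g 1) = g := by
  rw [addVal_apply, orderTop_single one_ne_zero]

end Valuation

theorem addVal_ofPowerSeries_nonneg {R : Type*} [CommRing R] [IsDomain R] (a : PowerSeries R) :
    0 ≤ addVal ℤ R (ofPowerSeries ℤ R a) := by
  rw [addVal_apply, ofPowerSeries_apply, orderTop_embDomain]
  cases (toPowerSeries.symm a).orderTop <;> simp

end HahnSeries

section Frame

variable {F : Type*} [Field F] {n : ℕ}

theorem exists_coeffs_of_mem_frameLattice {x : Fin n → Fin n → LaurentSeries F} {c : Fin n → ℤ}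
    {v : Fin n → LaurentSeries F} (hv : v ∈ frameLattice x c) :
    ∃ b : Fin n → LaurentSeries F, (∀ j, ((-c j : ℤ) : WithTop ℤ) ≤ addVal ℤ F (b j)) ∧
      v = ∑ j, b j • x j := by
  obtain ⟨a, rfl⟩ := (Submodule.mem_span_range_iff_exists_fun (PowerSeries F)).mp hv
  refine ⟨fun j => ofPowerSeries ℤ F (a j) * single (-c j) 1, fun j => ?_, ?_⟩
  · rw [AddValuation.map_mul, addVal_single_one]
    exact le_add_of_nonneg_left (addVal_ofPowerSeries_nonneg _)
  · simp only [mul_smul, ← LaurentSeries.coe_algebraMap, algebraMap_smul]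

theorem neg_order_det_le_of_mem_frameLattice (x : Fin n → Fin n → LaurentSeries F)
    (c : Fin n → Fin n → ℤ) {v : Fin n → Fin n → LaurentSeries F}
    (hv : ∀ m, v m ∈ frameLattice x (c m)) (hX : (Matrix.of fun p i => x i p).det ≠ 0)
    (hdet : (Matrix.of fun p m => v m p).det ≠ 0) :
    -(Matrix.of fun p m => v m p).det.order ≤
      Finset.univ.sup' Finset.univ_nonempty (fun σ : Perm (Fin n) => ∑ i, c i (σ i)) -
        (Matrix.of fun p i => x i p).det.order := by
  set M := Finset.univ.sup' Finset.univ_nonempty fun σ : Perm (Fin n) => ∑ i, c i (σ i)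
  choose b hb hvb using fun m => exists_coeffs_of_mem_frameLattice (hv m)
  set B : Matrix (Fin n) (Fin n) (LaurentSeries F) := Matrix.of fun j m => b m j
  have hVB : (Matrix.of fun p m => v m p).det = (Matrix.of fun p i => x i p).det * B.det := by
    simp_rw [hvb]
    exact det_of_sum_smul_cols x B
  have hB : B.det ≠ 0 := right_ne_zero_of_mul (hVB ▸ hdet)
  have hBval : ((-M : ℤ) : WithTop ℤ) ≤ addVal ℤ F B.det := by
    refine (addVal ℤ F).le_map_det B fun σ => ?_
    calc ((-M : ℤ) : WithTop ℤ) ≤ ((∑ i, -c i (σ i) : ℤ) : WithTop ℤ) := by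
          rw [Finset.sum_neg_distrib, WithTop.coe_le_coe, neg_le_neg_iff]
          exact Finset.le_sup' (fun σ : Perm (Fin n) => ∑ i, c i (σ i)) (Finset.mem_univ σ)
      _ = ∑ i, ((-c i (σ i) : ℤ) : WithTop ℤ) := WithTop.coe_sum _ _
      _ ≤ ∑ i, addVal ℤ F (B (σ i) i) := Finset.sum_le_sum fun i _ => hb i (σ i)
  rw [addVal_apply_of_ne hB, WithTop.coe_le_coe] at hBval
  rw [hVB, order_mul hX hB]
  omega

theorem order_det_smul_permute_frame (x : Fin n → Fin n → LaurentSeries F) (e : Fin n → ℤ)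
    (σ : Perm (Fin n)) (hX : (Matrix.of fun p i => x i p).det ≠ 0) :
    (Matrix.of fun p m => (single (e m) (1 : F) • x (σ m)) p).det ≠ 0 ∧
      (Matrix.of fun p m => (single (e m) (1 : F) • x (σ m)) p).det.order =
        ∑ m, e m + (Matrix.of fun p i => x i p).det.order := by
  have hval := (addVal ℤ F).map_det_mul_permute_cols (Matrix.of fun p i => x i p) σ
    fun m => single (e m) 1
  simp only [addVal_single_one, addVal_apply_of_ne hX, ← WithTop.coe_sum, ← WithTop.coe_add,
    addVal_eq_coe_iff] at hval
  exact hval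

end Frame

theorem apartment_val_eq_max_transversal_general {F : Type*} [Field F] {n : ℕ}
    (x : Fin n → (Fin n → LaurentSeries F))
    (hx_ind : LinearIndependent (LaurentSeries F) x)
    (c : Fin n → Fin n → ℤ)
    (L : Fin n → Submodule (PowerSeries F) (Fin n → LaurentSeries F))
    (hL : ∀ i, L i = frameLattice x (c i)) :
    IsGreatest (detValSet L)
      (Finset.univ.sup' Finset.univ_nonempty
        (fun σ : Equiv.Perm (Fin n) => ∑ i, c i (σ i)) -
        ((Matrix.of fun p i => x i p).det).order) := by
  have hX : (Matrix.of fun p i => x i p).det ≠ 0 :=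
    ((isUnit_iff_isUnit_det _).mp (linearIndependent_cols_iff_isUnit.mp hx_ind)).ne_zero
  refine ⟨?_, ?_⟩
  · obtain ⟨σ, -, hσ⟩ := Finset.exists_mem_eq_sup' Finset.univ_nonempty
      fun σ : Perm (Fin n) => ∑ i, c i (σ i)
    obtain ⟨hne, hord⟩ := order_det_smul_permute_frame x (fun m => -c m (σ m)) σ hX
    refine ⟨_, fun m => hL m ▸ Submodule.subset_span ⟨σ m, rfl⟩, hne, ?_⟩
    rw [hord, Finset.sum_neg_distrib, hσ]
    ring
  · rintro _ ⟨v, hv, hdet, rfl⟩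
    exact neg_order_det_le_of_mem_frameLattice x c (fun m => hL m ▸ hv m) hX hdet

/-- For lattices `L i = ⟨t^{-c i 0} x 0, …, t^{-c i (n-1)} x (n-1)⟩` in a common
apartment, `fᵗ_{1,…,1}(L 0,…,L (n-1))` equals the maximal transversal sum of the
exponent matrix `[c i j]` minus `val (det (x 0, …, x (n-1)))`. -/
theorem apartment_val_eq_max_transversal {F : Type*} [Field F] {n : ℕ}
    (x : Fin n → (Fin n → LaurentSeries F))
    (hx_ind : LinearIndependent (LaurentSeries F) x)
    (hx_span : Submodule.span (LaurentSeries F) (Set.range x) = ⊤)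
    (c : Fin n → Fin n → ℤ)
    (L : Fin n → Submodule (PowerSeries F) (Fin n → LaurentSeries F))
    (hL : ∀ i, L i = frameLattice x (c i)) :
    IsGreatest (detValSet L)
      (Finset.univ.sup' Finset.univ_nonempty
        (fun σ : Equiv.Perm (Fin n) => ∑ i, c i (σ i)) -
        ((Matrix.of fun p i => x i p).det).order) :=
  apartment_val_eq_max_transversal_general x hx_ind c L hL
end
end

section
/- Let $U_1, U_2, U_3$ be subspaces of a vector space $V$ over a field $F$. Then the quadruple $(U_1, U_2, U_3, V)$, regarded as a representation of the quiver of type $D_4$ (three sources mapping into a central vertex, with injective structure maps), decomposes as a direct sum of indecomposable representations, each of which has central-vertex dimension at most $2$, and in which each $U_m$ has dimension at most $1$. -/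
/-!
Induct on the subspace `P` still to be decomposed: it suffices to split off from `P` a nonzero
summand `W₀` of dimension `≤ 2`, meeting each `U m` in dimension `≤ 1`, with a complement in `P`
compatible with all `U m`. Inside `P`, either some vector `v` lies in `U m` for all `m ∈ M` but not
in `⨆ m ∉ M, U m`, for some set `M` of indices — then the line through `v` splits off, with a
complement containing the other `U m` — or the three subspaces are pairwise complementary. In the
latter case `U 1` is the graph of an isomorphism `U 0 ≃ U 2`: a nonzero `x ∈ U 1` decomposes as
`a + c` along `U 0 ⊕ U 2`, the plane spanned by `a` and `c` splits off, and its complement is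
spanned by the two projections of a complement of `x` in `U 1`; a dimension count shows that the
sum is direct.
-/

section Lattice
variable {α : Type*}

theorem iSupIndep_option_elim [CompleteLattice α] [IsModularLattice α] {ι : Type*} {a : α}
    {t : ι → α} (ht : iSupIndep t) (ha : Disjoint a (⨆ i, t i)) :
    iSupIndep fun o : Option ι => o.elim a t := by
  rintro (_ | i)
  · refine ha.mono_right (iSup₂_le fun j hj => ?_)
    obtain ⟨i, rfl⟩ := Option.ne_none_iff_exists'.mp hj
    exact le_iSup t i
  · have hsup : Disjoint (t i ⊔ ⨆ (k) (_ : k ≠ i), t k) a := by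
      rw [← iSup_split_single]; exact ha.symm
    refine ((ht i).disjoint_sup_right_of_disjoint_sup_left hsup).mono_right (iSup₂_le ?_)
    rintro (_ | k) hk
    · exact le_sup_right
    · exact le_sup_of_le_left (le_iSup₂_of_le k (fun h => hk (congrArg _ h)) le_rfl)

theorem eq_inf_sup_inf_of_sup_eq [Lattice α] {u x y w₀ w₁ : α} (hx : x ≤ w₀) (hy : y ≤ w₁)
    (hu : x ⊔ y = u) : u = u ⊓ w₀ ⊔ u ⊓ w₁ := by
  refine le_antisymm ?_ (sup_le inf_le_left inf_le_left)
  rw [← hu]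
  exact sup_le_sup (le_inf le_sup_left hx) (le_inf le_sup_right hy)

theorem exists_isCompl_forall_eq_inf_sup_inf [Lattice α] [BoundedOrder α] [IsModularLattice α]
    [ComplementedLattice α] {κ : Type*} {u : κ → α} {l s : α} (hls : Disjoint l s)
    (hu : ∀ m, l ≤ u m ∨ u m ≤ s) : ∃ q, IsCompl l q ∧ ∀ m, u m = u m ⊓ l ⊔ u m ⊓ q := by
  obtain ⟨q, hsq, hq⟩ := hls.symm.exists_isCompl
  refine ⟨q, hq.symm, fun m => ?_⟩
  rcases hu m with hl | hs
  · refine eq_inf_sup_inf_of_sup_eq le_rfl (inf_le_right : u m ⊓ q ≤ q) ?_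
    rw [inf_comm, ← sup_inf_assoc_of_le q hl, hq.symm.sup_eq_top, top_inf_eq]
  · exact eq_inf_sup_inf_of_sup_eq bot_le (hs.trans hsq) (bot_sup_eq _)

theorem isCompl_of_inf_le_of_le_sup [Lattice α] [BoundedOrder α] {a b c : α} (hinf : a ⊓ b ≤ c)
    (hbot : a ⊓ b ⊓ c = ⊥) (hsup : c ≤ a ⊔ b) (htop : a ⊔ b ⊔ c = ⊤) : IsCompl a b :=
  ⟨disjoint_iff.mpr (le_bot_iff.mp (hbot ▸ le_inf le_rfl hinf)),
    codisjoint_iff.mpr (top_le_iff.mp (htop ▸ sup_le le_rfl hsup))⟩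

theorem pairwise_isCompl_of_forall_iInf_le_iSup [CompleteLattice α] {u : Fin 3 → α}
    (h : ∀ M : Finset (Fin 3), ⨅ m ∈ M, u m ≤ ⨆ m ∉ M, u m) :
    IsCompl (u 0) (u 1) ∧ IsCompl (u 0) (u 2) ∧ IsCompl (u 1) (u 2) := by
  have h012 : u 0 ⊓ (u 1 ⊓ u 2) = ⊥ := by simpa [iInf_or, iInf_inf_eq] using h {0, 1, 2}
  have htop : u 0 ⊔ u 1 ⊔ u 2 = ⊤ := by simpa using h ∅
  refine ⟨isCompl_of_inf_le_of_le_sup (c := u 2) ?_ (by rw [← h012]; ac_rfl)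
      (by simpa using h {2}) htop,
    isCompl_of_inf_le_of_le_sup (c := u 1) ?_ (by rw [← h012]; ac_rfl)
      (by simpa using h {1}) (by rw [← htop]; ac_rfl),
    isCompl_of_inf_le_of_le_sup (c := u 0) ?_ (by rw [← h012]; ac_rfl)
      (by simpa using h {0}) (by rw [← htop]; ac_rfl)⟩
  · simpa [iInf_or, iInf_inf_eq] using h {0, 1}
  · simpa [iInf_or, iInf_inf_eq] using h {0, 2}
  · simpa [iInf_or, iInf_inf_eq] using h {1, 2}

end Lattice

open Module Submodule

section Module
variable {R M : Type*} [Ring R] [AddCommGroup M] [Module R M]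

theorem Submodule.map_projection_eq_of_codisjoint {p q b : Submodule R M} (hpq : IsCompl p q)
    (hbq : Codisjoint b q) : map (p.projection q hpq) b = p := by
  have hq : map (p.projection q hpq) q = ⊥ := by
    rw [← LinearMap.le_ker_iff_map, ker_projection]
  rw [← sup_bot_eq (map _ b), ← hq, ← map_sup, hbq.eq_top, map_top, range_projection]

theorem Submodule.eq_inf_sup_inf_of_map_projection {p q b b' W W' : Submodule R M}
    (hpq : IsCompl p q) (hbq : Codisjoint b q) {x : M} (hb : span R {x} ⊔ b' = b)
    (hx : p.projection q hpq x ∈ W) (hb' : map (p.projection q hpq) b' ≤ W') :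
    p = p ⊓ W ⊔ p ⊓ W' := by
  refine eq_inf_sup_inf_of_sup_eq ((span_singleton_le_iff_mem _ W).mpr hx) hb' ?_
  rw [← Set.image_singleton, ← map_span, ← Submodule.map_sup, hb,
    map_projection_eq_of_codisjoint hpq hbq]

theorem Submodule.finrank_span_pair_le [StrongRankCondition R] (a b : M) :
    finrank R (span R {a, b}) ≤ 2 := by
  classical
  have h := (finrank_span_finset_le_card (R := R) {a, b}).trans Finset.card_le_two
  rwa [Set.finrank, Finset.coe_pair] at h

theorem Submodule.map_subtype_comap_inf (P U : Submodule R M) (X : Submodule R P) :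
    map P.subtype (comap P.subtype U ⊓ X) = U ⊓ map P.subtype X := by
  rw [map_inf _ P.injective_subtype, map_comap_subtype, inf_comm P, inf_assoc,
    inf_eq_right.mpr (map_subtype_le P X)]

end Module

section VectorSpace
variable {F V : Type*} [Field F] [AddCommGroup V] [Module F V] {κ : Type*}

/-- Compatibility of the direct sum `W₀ ⊕ W₁` with each `U m` is encoded as distributivity of
`U m ⊓ ·` over it. -/
structure IsSmallSplitting (U : κ → Submodule F V) (W₀ W₁ : Submodule F V) : Prop where
  ne_bot : W₀ ≠ ⊥
  disjoint : Disjoint W₀ W₁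
  finrank_le : finrank F W₀ ≤ 2
  finrank_inf_le : ∀ m, finrank F ↥(U m ⊓ W₀) ≤ 1
  inf_sup_eq : ∀ m, U m ⊓ (W₀ ⊔ W₁) = U m ⊓ W₀ ⊔ U m ⊓ W₁

structure IsSmallDecomposition (U : κ → Submodule F V) {ι : Type*} (W : ι → Submodule F V) :
    Prop where
  iSupIndep : iSupIndep W
  finrank_le : ∀ l, finrank F (W l) ≤ 2
  finrank_inf_le : ∀ m l, finrank F ↥(U m ⊓ W l) ≤ 1
  inf_iSup_eq : ∀ m, U m ⊓ ⨆ l, W l = ⨆ l, U m ⊓ W l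

theorem IsSmallSplitting.lt_sup {U : κ → Submodule F V} {W₀ W₁ : Submodule F V}
    (h : IsSmallSplitting U W₀ W₁) : W₁ < W₀ ⊔ W₁ :=
  right_lt_sup.mpr fun hle => h.ne_bot (h.disjoint.eq_bot_of_le hle)

theorem IsSmallSplitting.map_subtype {U : κ → Submodule F V} {P : Submodule F V}
    {X Y : Submodule F P} (h : IsSmallSplitting (fun m => comap P.subtype (U m)) X Y) :
    IsSmallSplitting U (map P.subtype X) (map P.subtype Y) where
  ne_bot hX :=
    h.ne_bot (map_injective_of_injective P.injective_subtype (hX.trans (Submodule.map_bot _).symm))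
  disjoint := disjoint_map P.injective_subtype h.disjoint
  finrank_le := (finrank_map_subtype_eq P X).symm ▸ h.finrank_le
  finrank_inf_le m := by
    rw [← map_subtype_comap_inf, finrank_map_subtype_eq]; exact h.finrank_inf_le m
  inf_sup_eq m := by
    rw [← Submodule.map_sup, ← map_subtype_comap_inf, h.inf_sup_eq m, Submodule.map_sup,
      map_subtype_comap_inf, map_subtype_comap_inf]

theorem IsSmallDecomposition.option {U : κ → Submodule F V} {ι : Type*} {W : ι → Submodule F V}
    {W₀ : Submodule F V} (hW : IsSmallDecomposition U W) (h : IsSmallSplitting U W₀ (⨆ l, W l)) :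
    IsSmallDecomposition U fun o : Option ι => o.elim W₀ W where
  iSupIndep := iSupIndep_option_elim hW.iSupIndep h.disjoint
  finrank_le := by
    rintro (_ | l)
    exacts [h.finrank_le, hW.finrank_le l]
  finrank_inf_le m := by
    rintro (_ | l)
    exacts [h.finrank_inf_le m, hW.finrank_inf_le m l]
  inf_iSup_eq m := by
    rw [iSup_option_elim, h.inf_sup_eq m, hW.inf_iSup_eq m, iSup_option]
    rfl

theorem isSmallDecomposition_empty (U : κ → Submodule F V) :
    IsSmallDecomposition U (fun e : Empty => e.elim) where
  iSupIndep := iSupIndep_subsingleton _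
  finrank_le := nofun
  finrank_inf_le _ := nofun
  inf_iSup_eq _ := by simp only [iSup_of_empty, inf_bot_eq]

theorem exists_isSmallSplitting_of_notMem {U : κ → Submodule F V} {v : V} {S : Submodule F V}
    (hv : v ∉ S) (hU : ∀ m, v ∈ U m ∨ U m ≤ S) :
    ∃ W₀ W₁, IsSmallSplitting U W₀ W₁ ∧ W₀ ⊔ W₁ = ⊤ := by
  have hv0 : v ≠ 0 := by rintro rfl; exact hv S.zero_mem
  obtain ⟨Q, hQ, hUQ⟩ := exists_isCompl_forall_eq_inf_sup_inf
    ((disjoint_span_singleton' hv0).mpr hv).symm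
    fun m => (hU m).imp_left (span_singleton_le_iff_mem v _).mpr
  have hline := finrank_span_singleton (K := F) hv0
  refine ⟨span F {v}, Q, ⟨span_singleton_eq_bot.not.mpr hv0, hQ.disjoint, by omega,
    fun m => hline ▸ finrank_mono inf_le_right, fun m => ?_⟩, hQ.sup_eq_top⟩
  rw [hQ.sup_eq_top, inf_top_eq, ← hUQ m]

variable [FiniteDimensional F V]

theorem finrank_inf_le_one_of_disjoint {X Y W : Submodule F V} (hW : finrank F W ≤ 2)
    (hXY : Disjoint X Y) {y : V} (hyY : y ∈ Y) (hyW : y ∈ W) (hy : y ≠ 0) :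
    finrank F ↥(X ⊓ W) ≤ 1 := by
  have hdisj : Disjoint (X ⊓ W) (span F {y}) :=
    hXY.mono inf_le_left ((span_singleton_le_iff_mem y Y).mpr hyY)
  have hle : X ⊓ W ⊔ span F {y} ≤ W :=
    sup_le inf_le_right ((span_singleton_le_iff_mem y W).mpr hyW)
  have := finrank_sup_add_finrank_inf_eq (X ⊓ W) (span F {y})
  rw [hdisj.eq_bot, finrank_bot, finrank_span_singleton hy] at this
  have := finrank_mono hle
  omega

theorem disjoint_of_sup_eq_top_of_finrank_add_le {W₀ W₁ : Submodule F V} (hsup : W₀ ⊔ W₁ = ⊤)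
    (hdim : finrank F W₀ + finrank F W₁ ≤ finrank F V) : Disjoint W₀ W₁ := by
  have := finrank_sup_add_finrank_inf_eq W₀ W₁
  rw [hsup, finrank_top] at this
  exact disjoint_iff.mpr (finrank_eq_zero.mp (by omega))

theorem finrank_eq_two_mul_of_isCompl {A B C : Submodule F V} (hAB : IsCompl A B)
    (hAC : IsCompl A C) (hBC : IsCompl B C) : finrank F V = 2 * finrank F B := by
  have := finrank_add_eq_of_isCompl hAB
  have := finrank_add_eq_of_isCompl hAC
  have := finrank_add_eq_of_isCompl hBC
  omega

theorem exists_isSmallSplitting_of_isCompl [Nontrivial V] {U : Fin 3 → Submodule F V}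
    (h01 : IsCompl (U 0) (U 1)) (h02 : IsCompl (U 0) (U 2)) (h12 : IsCompl (U 1) (U 2)) :
    ∃ W₀ W₁, IsSmallSplitting U W₀ W₁ ∧ W₀ ⊔ W₁ = ⊤ := by
  have hdimB := finrank_eq_two_mul_of_isCompl h01 h02 h12
  obtain ⟨x, hxB, hx0⟩ := exists_mem_ne_zero_of_ne_bot
    (one_le_finrank_iff.mp (by have := finrank_pos (R := F) (M := V); omega) : U 1 ≠ ⊥)
  set f := (U 0).projection (U 2) h02
  set g := (U 2).projection (U 0) h02.symm
  have hfg : ∀ y, f y + g y = y := projection_add_projection_eq_self h02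
  have hfx : f x ≠ 0 := fun h =>
    hx0 (disjoint_def.mp h12.disjoint x hxB ((projection_apply_eq_zero_iff h02).mp h))
  obtain ⟨B', hxB', hB'⟩ :=
    IsModularLattice.exists_disjoint_and_sup_eq ((span_singleton_le_iff_mem x _).mpr hxB)
  set W₀ := span F {f x, g x}
  set W₁ := map f B' ⊔ map g B'
  have hxW₀ : x ∈ W₀ := hfg x ▸ add_mem (subset_span (by simp)) (subset_span (by simp))
  have hA : U 0 = U 0 ⊓ W₀ ⊔ U 0 ⊓ W₁ :=
    eq_inf_sup_inf_of_map_projection h02 h12.codisjoint hB' (subset_span (Set.mem_insert _ _))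
      le_sup_left
  have hC : U 2 = U 2 ⊓ W₀ ⊔ U 2 ⊓ W₁ :=
    eq_inf_sup_inf_of_map_projection h02.symm h01.codisjoint.symm hB'
      (subset_span (Set.mem_insert_of_mem _ rfl)) le_sup_right
  have hB : U 1 = U 1 ⊓ W₀ ⊔ U 1 ⊓ W₁ := by
    refine eq_inf_sup_inf_of_sup_eq (x := span F {x}) (y := B') ?_ (fun b hb => ?_) hB'
    · exact (span_singleton_le_iff_mem x W₀).mpr hxW₀
    · exact hfg b ▸ add_mem (mem_sup_left (mem_map_of_mem hb)) (mem_sup_right (mem_map_of_mem hb))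
  have hsup : W₀ ⊔ W₁ = ⊤ := top_le_iff.mp <| h02.codisjoint.top_le.trans <|
    sup_le (hA.le.trans (sup_le_sup inf_le_right inf_le_right))
      (hC.le.trans (sup_le_sup inf_le_right inf_le_right))
  have hdimW₀ : finrank F W₀ ≤ 2 := finrank_span_pair_le _ _
  have hdimW₁ : finrank F W₁ ≤ finrank F B' + finrank F B' :=
    (finrank_add_le_finrank_add_finrank _ _).trans
      (add_le_add (finrank_map_le f B') (finrank_map_le g B'))
  have hdimB' : finrank F (U 1) = 1 + finrank F B' := by
    rw [← finrank_span_singleton (K := F) hx0, ← finrank_sup_add_finrank_inf_eq, hB',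
      hxB'.eq_bot, finrank_bot, add_zero]
  refine ⟨W₀, W₁, ⟨fun h => hx0 ((mem_bot F).mp (h ▸ hxW₀)),
    disjoint_of_sup_eq_top_of_finrank_add_le hsup (by omega), hdimW₀, fun m => ?_,
    fun m => ?_⟩, hsup⟩
  · fin_cases m
    · exact finrank_inf_le_one_of_disjoint hdimW₀ h01.disjoint hxB hxW₀ hx0
    · exact finrank_inf_le_one_of_disjoint hdimW₀ h01.symm.disjoint (projection_apply_mem h02 x)
        (subset_span (Set.mem_insert _ _)) hfx
    · exact finrank_inf_le_one_of_disjoint hdimW₀ h12.symm.disjoint hxB hxW₀ hx0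
  · rw [hsup, inf_top_eq]
    fin_cases m
    exacts [hA, hB, hC]

theorem exists_isSmallSplitting_top [Nontrivial V] (U : Fin 3 → Submodule F V) :
    ∃ W₀ W₁, IsSmallSplitting U W₀ W₁ ∧ W₀ ⊔ W₁ = ⊤ := by
  by_cases h : ∀ M : Finset (Fin 3), ⨅ m ∈ M, U m ≤ ⨆ m ∉ M, U m
  · obtain ⟨h01, h02, h12⟩ := pairwise_isCompl_of_forall_iInf_le_iSup h
    exact exists_isSmallSplitting_of_isCompl h01 h02 h12
  · obtain ⟨M, hM⟩ := not_forall.mp h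
    obtain ⟨v, hv, hvS⟩ := SetLike.not_le_iff_exists.mp hM
    refine exists_isSmallSplitting_of_notMem hvS fun m => ?_
    by_cases hm : m ∈ M
    · exact Or.inl ((mem_iInf _).mp ((mem_iInf _).mp hv m) hm)
    · exact Or.inr (le_iSup₂_of_le m hm le_rfl)

theorem exists_isSmallSplitting_of_ne_bot (U : Fin 3 → Submodule F V) {P : Submodule F V}
    (hP : P ≠ ⊥) : ∃ W₀ W₁, IsSmallSplitting U W₀ W₁ ∧ W₀ ⊔ W₁ = P := by
  have := nontrivial_iff_ne_bot.mpr hP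
  obtain ⟨X, Y, h, hXY⟩ := exists_isSmallSplitting_top fun m => comap P.subtype (U m)
  exact ⟨_, _, h.map_subtype, by rw [← Submodule.map_sup, hXY, map_subtype_top]⟩

theorem exists_isSmallDecomposition (U : Fin 3 → Submodule F V) (P : Submodule F V) :
    ∃ (ι : Type) (_ : Fintype ι) (W : ι → Submodule F V),
      IsSmallDecomposition U W ∧ ⨆ l, W l = P := by
  induction P using WellFoundedLT.induction with
  | _ P ih =>
  rcases eq_or_ne P ⊥ with rfl | hP
  · exact ⟨Empty, inferInstance, _, isSmallDecomposition_empty U, iSup_of_empty _⟩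
  obtain ⟨W₀, P₁, h, rfl⟩ := exists_isSmallSplitting_of_ne_bot U hP
  obtain ⟨ι, _, W, hW, rfl⟩ := ih _ h.lt_sup
  exact ⟨Option ι, inferInstance, _, hW.option h, iSup_option_elim _ _⟩

end VectorSpace

/-- Gabriel-type decomposition of a system of three subspaces (a representation
of the `D₄` quiver with injective maps): there is a finite direct-sum
decomposition `V = ⊕ W l` compatible with each `U m` (i.e. `U m` is the direct
sum of its intersections with the summands), in which each summand has
dimension at most `2` and meets each `U m` in dimension at most `1`. -/
theorem three_subspace_D4_decomposition {F V : Type*} [Field F] [AddCommGroup V]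
    [Module F V] [FiniteDimensional F V] (U : Fin 3 → Submodule F V) :
    ∃ (ι : Type) (_ : Fintype ι) (W : ι → Submodule F V),
      iSupIndep W ∧ (⨆ l, W l) = ⊤ ∧
      (∀ l, Module.finrank F ↥(W l) ≤ 2) ∧
      (∀ m l, Module.finrank F ↥(U m ⊓ W l) ≤ 1) ∧
      (∀ m, U m = ⨆ l, U m ⊓ W l) := by
  obtain ⟨ι, _, W, hW, htop⟩ := exists_isSmallDecomposition U ⊤
  refine ⟨ι, inferInstance, W, hW.iSupIndep, htop, hW.finrank_le, hW.finrank_inf_le, fun m => ?_⟩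
  rw [← hW.inf_iSup_eq, htop, inf_top_eq]
end
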